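/- arXiv:1202.3836 — 10 statements merged into one kernel-verified Lean document; each statement's English description precedes it below -/
import Mathlib

section
/- Matrix Riccati comparison: let A₁, A₂, R₁, R₂ : ℝ → Matrix (Fin n) (Fin n) ℝ be continuous families of symmetric matrices with A₁(t) ≥ A₂(t) and R₁(t) ≥ R₂(t) for all t ≥ t₀ (in the Loewner order). Let S₁, S₂ be symmetric-valued solutions on [t₀, T] of Sᵢ'(t) + Sᵢ(t) Aᵢ(t) Sᵢ(t) + Rᵢ(t) = 0. If S₂(t₀) ≥ S₁(t₀), then S₂(t) ≥ S₁(t) for all t in [t₀, T]. -/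
open Matrix Set Filter Topology

private lemma stmt4_herm_of_tr {n : ℕ} {M : Matrix (Fin n) (Fin n) ℝ} (h : Mᵀ = M) :
    M.IsHermitian := by
  unfold Matrix.IsHermitian
  ext i j
  have := congrFun (congrFun h i) j
  simpa [Matrix.conjTranspose_apply, Matrix.transpose_apply] using this

private lemma stmt4_psd_quad {n : ℕ} {M : Matrix (Fin n) (Fin n) ℝ} (h : M.PosSemidef)
    (x : Fin n → ℝ) : 0 ≤ x ⬝ᵥ M *ᵥ x := by simpa using h.dotProduct_mulVec_nonneg x

private lemma stmt4_pd_quad {n : ℕ} {M : Matrix (Fin n) (Fin n) ℝ} (h : M.PosDef)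
    {x : Fin n → ℝ} (hx : x ≠ 0) : 0 < x ⬝ᵥ M *ᵥ x := by simpa using h.dotProduct_mulVec_pos hx

private lemma stmt4_pd_of {n : ℕ} {M : Matrix (Fin n) (Fin n) ℝ} (h : Mᵀ = M)
    (h2 : ∀ x : Fin n → ℝ, x ≠ 0 → 0 < x ⬝ᵥ M *ᵥ x) : M.PosDef :=
  .of_dotProduct_mulVec_pos (stmt4_herm_of_tr h) fun x hx => by simpa using h2 x hx

private lemma stmt4_psd_of {n : ℕ} {M : Matrix (Fin n) (Fin n) ℝ} (h : Mᵀ = M)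
    (h2 : ∀ x : Fin n → ℝ, 0 ≤ x ⬝ᵥ M *ᵥ x) : M.PosSemidef :=
  .of_dotProduct_mulVec_nonneg (stmt4_herm_of_tr h) fun x => by simpa using h2 x

private lemma stmt4_dp_quad {n : ℕ} (M : Matrix (Fin n) (Fin n) ℝ) (x : Fin n → ℝ) :
    x ⬝ᵥ M *ᵥ x = ∑ i, x i * ∑ j, M i j * x j := by
  simp [dotProduct, Matrix.mulVec]

private lemma stmt4_quad_deriv {n : ℕ} {M : ℝ → Matrix (Fin n) (Fin n) ℝ}
    {M' : Matrix (Fin n) (Fin n) ℝ} {t : ℝ}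
    (h : ∀ i j, HasDerivAt (fun u => M u i j) (M' i j) t) (x : Fin n → ℝ) :
    HasDerivAt (fun u => x ⬝ᵥ (M u) *ᵥ x) (x ⬝ᵥ M' *ᵥ x) t := by
  simp only [stmt4_dp_quad]
  exact HasDerivAt.fun_sum fun i _ =>
    ((HasDerivAt.fun_sum fun j _ => ((h i j).mul_const (x j))).const_mul (x i))

private lemma stmt4_quad_bound {n : ℕ} {M : Matrix (Fin n) (Fin n) ℝ} {C : ℝ} (hC0 : 0 ≤ C)
    (hC : ∀ i j, |M i j| ≤ C) (x : Fin n → ℝ) :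
    |x ⬝ᵥ M *ᵥ x| ≤ n * C * (x ⬝ᵥ x) := by
  have h1 : |x ⬝ᵥ M *ᵥ x| ≤ C * (∑ i, |x i|) ^ 2 := by
    rw [stmt4_dp_quad]
    calc |∑ i, x i * ∑ j, M i j * x j| ≤ ∑ i, |x i * ∑ j, M i j * x j| :=
          Finset.abs_sum_le_sum_abs _ _
      _ ≤ ∑ i, |x i| * (C * ∑ j, |x j|) := by
          refine Finset.sum_le_sum fun i _ => ?_
          rw [abs_mul]
          refine mul_le_mul_of_nonneg_left ?_ (abs_nonneg _)
          calc |∑ j, M i j * x j| ≤ ∑ j, |M i j * x j| := Finset.abs_sum_le_sum_abs _ _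
            _ ≤ ∑ j, C * |x j| := by
                refine Finset.sum_le_sum fun j _ => ?_
                rw [abs_mul]
                exact mul_le_mul_of_nonneg_right (hC i j) (abs_nonneg _)
            _ = C * ∑ j, |x j| := by rw [Finset.mul_sum]
      _ = C * (∑ i, |x i|) ^ 2 := by rw [← Finset.sum_mul]; ring
  have h2 : (∑ i, |x i|) ^ 2 ≤ (n : ℝ) * ∑ i, |x i| ^ 2 := by
    simpa using sq_sum_le_card_mul_sum_sq (s := Finset.univ) (f := fun i => |x i|)
  have h3 : (∑ i, |x i| ^ 2) = x ⬝ᵥ x := by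
    simp [dotProduct, sq_abs, sq]
  calc |x ⬝ᵥ M *ᵥ x| ≤ C * ((n : ℝ) * ∑ i, |x i| ^ 2) :=
        le_trans h1 (mul_le_mul_of_nonneg_left h2 hC0)
    _ = n * C * (x ⬝ᵥ x) := by rw [h3]; ring

private lemma stmt4_dp_self_pos {n : ℕ} {x : Fin n → ℝ} (hx : x ≠ 0) : 0 < x ⬝ᵥ x := by
  rcases lt_or_eq_of_le (Finset.sum_nonneg fun i _ => mul_self_nonneg (x i) :
      (0:ℝ) ≤ x ⬝ᵥ x) with h | h
  · exact h
  · exact absurd ((dotProduct_self_eq_zero).mp h.symm) hx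

private lemma stmt4_coercive {n : ℕ} (hn : 0 < n) {M : Matrix (Fin n) (Fin n) ℝ}
    (hM : ∀ x : Fin n → ℝ, x ≠ 0 → 0 < x ⬝ᵥ M *ᵥ x) :
    ∃ c > 0, ∀ x : Fin n → ℝ, c * (x ⬝ᵥ x) ≤ x ⬝ᵥ M *ᵥ x := by
  set K : Set (Fin n → ℝ) := {x | x ⬝ᵥ x = 1} with hK
  have hdpcont : Continuous fun x : Fin n → ℝ => x ⬝ᵥ x := by
    simp only [dotProduct]
    exact continuous_finset_sum _ fun i _ => (continuous_apply i).mul (continuous_apply i)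
  have hKc : IsCompact K := by
    have hclosed : IsClosed K := isClosed_eq hdpcont continuous_const
    have hsub : K ⊆ Metric.closedBall 0 1 := by
      intro x hx
      rw [Metric.mem_closedBall, dist_zero_right]
      rw [pi_norm_le_iff_of_nonneg zero_le_one]
      intro i
      rw [Real.norm_eq_abs, abs_le_one_iff_mul_self_le_one]
      calc x i * x i ≤ x ⬝ᵥ x := by
            rw [dotProduct]
            exact Finset.single_le_sum (f := fun j => x j * x j)
              (fun j _ => mul_self_nonneg _) (Finset.mem_univ i)
        _ = 1 := hx
    exact (isCompact_closedBall 0 1).of_isClosed_subset hclosed hsub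
  have hKne : K.Nonempty := by
    refine ⟨Pi.single ⟨0, hn⟩ 1, ?_⟩
    simp [hK, dotProduct, Pi.single_apply]
  have hqcont : Continuous fun x : Fin n → ℝ => x ⬝ᵥ M *ᵥ x := by
    simp only [dotProduct, Matrix.mulVec]
    exact continuous_finset_sum _ fun i _ => (continuous_apply i).mul
      (continuous_finset_sum _ fun j _ => continuous_const.mul (continuous_apply j))
  obtain ⟨x₀, hx₀K, hx₀min⟩ := hKc.exists_isMinOn hKne hqcont.continuousOn
  have hx₀ne : x₀ ≠ 0 := by
    intro h
    rw [hK] at hx₀K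
    simp [h] at hx₀K
  refine ⟨x₀ ⬝ᵥ M *ᵥ x₀, hM x₀ hx₀ne, fun x => ?_⟩
  by_cases hx : x = 0
  · simp [hx]
  · have hr : 0 < x ⬝ᵥ x := stmt4_dp_self_pos hx
    set r := Real.sqrt (x ⬝ᵥ x) with hrdef
    have hrpos : 0 < r := Real.sqrt_pos.mpr hr
    set y : Fin n → ℝ := r⁻¹ • x with hy
    have hyK : y ∈ K := by
      rw [hK, mem_setOf_eq, hy, smul_dotProduct, dotProduct_smul, smul_eq_mul,
        smul_eq_mul, ← mul_assoc]
      rw [show x ⬝ᵥ x = r * r from (Real.mul_self_sqrt hr.le).symm]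
      field_simp
    have hmin := hx₀min hyK
    simp only [Set.mem_setOf_eq] at hmin
    have hyq : y ⬝ᵥ M *ᵥ y = r⁻¹ * (r⁻¹ * (x ⬝ᵥ M *ᵥ x)) := by
      rw [hy, smul_dotProduct, Matrix.mulVec_smul, dotProduct_smul, smul_eq_mul,
        smul_eq_mul]
    rw [hyq] at hmin
    calc (x₀ ⬝ᵥ M *ᵥ x₀) * (x ⬝ᵥ x) = (x₀ ⬝ᵥ M *ᵥ x₀) * (r * r) := by
          rw [show x ⬝ᵥ x = r * r from (Real.mul_self_sqrt hr.le).symm]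
      _ ≤ (r⁻¹ * (r⁻¹ * (x ⬝ᵥ M *ᵥ x))) * (r * r) :=
          mul_le_mul_of_nonneg_right hmin (by positivity)
      _ = x ⬝ᵥ M *ᵥ x := by field_simp

private lemma stmt4_sym_dp {n : ℕ} {M : Matrix (Fin n) (Fin n) ℝ} (h : Mᵀ = M)
    (x v : Fin n → ℝ) : x ⬝ᵥ M *ᵥ v = (M *ᵥ x) ⬝ᵥ v := by
  rw [Matrix.dotProduct_mulVec]
  congr 1
  rw [← Matrix.vecMul_transpose, h]

private lemma stmt4_entry_bound {n : ℕ} (t₀ T : ℝ) (f : ℝ → Matrix (Fin n) (Fin n) ℝ)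
    (hf : ∀ i j, ContinuousOn (fun t => f t i j) (Icc t₀ T)) :
    ∃ C ≥ 0, ∀ t ∈ Icc t₀ T, ∀ i j, |f t i j| ≤ C := by
  have h : ∀ p : Fin n × Fin n, ∃ C, ∀ t ∈ Icc t₀ T, |f t p.1 p.2| ≤ C := by
    rintro ⟨i, j⟩
    obtain ⟨C, hC⟩ := (isCompact_Icc (a := t₀) (b := T)).exists_bound_of_continuousOn
      (hf i j)
    exact ⟨C, fun t ht => hC t ht⟩
  choose g hg using h
  obtain ⟨C, hC⟩ := Finite.exists_le g
  refine ⟨max C 0, le_max_right _ _, fun t ht i j => ?_⟩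
  exact le_trans (hg (i, j) t ht) (le_trans (hC (i, j)) (le_max_left _ _))

theorem stmt4 (n : ℕ) (t₀ T : ℝ)
    (A₁ A₂ R₁ R₂ S₁ S₂ : ℝ → Matrix (Fin n) (Fin n) ℝ)
    (hA₁symm : ∀ t, (A₁ t)ᵀ = A₁ t) (hA₂symm : ∀ t, (A₂ t)ᵀ = A₂ t)
    (hR₁symm : ∀ t, (R₁ t)ᵀ = R₁ t) (hR₂symm : ∀ t, (R₂ t)ᵀ = R₂ t)
    (hS₁symm : ∀ t, (S₁ t)ᵀ = S₁ t) (hS₂symm : ∀ t, (S₂ t)ᵀ = S₂ t)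
    (hA₁cont : ∀ i j, Continuous fun t => A₁ t i j)
    (hA₂cont : ∀ i j, Continuous fun t => A₂ t i j)
    (hR₁cont : ∀ i j, Continuous fun t => R₁ t i j)
    (hR₂cont : ∀ i j, Continuous fun t => R₂ t i j)
    (hA : ∀ t, t₀ ≤ t → (A₁ t - A₂ t).PosSemidef)
    (hR : ∀ t, t₀ ≤ t → (R₁ t - R₂ t).PosSemidef)
    (hS₁ : ∀ t ∈ Icc t₀ T, ∀ i j,
      HasDerivAt (fun τ => S₁ τ i j) ((-(S₁ t * A₁ t * S₁ t + R₁ t)) i j) t)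
    (hS₂ : ∀ t ∈ Icc t₀ T, ∀ i j,
      HasDerivAt (fun τ => S₂ τ i j) ((-(S₂ t * A₂ t * S₂ t + R₂ t)) i j) t)
    (h0 : (S₂ t₀ - S₁ t₀).PosSemidef) :
    ∀ t ∈ Icc t₀ T, (S₂ t - S₁ t).PosSemidef := by
  rcases Nat.eq_zero_or_pos n with hn0 | hn
  · subst hn0
    intro t _
    refine ⟨?_, fun x => ?_⟩
    · ext i j; exact i.elim0
    · rw [Subsingleton.elim x 0]; simp
  intro t ht
  have ht₀T : t₀ ≤ T := le_trans ht.1 ht.2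
  -- the difference
  set U : ℝ → Matrix (Fin n) (Fin n) ℝ := fun u => S₂ u - S₁ u with hU
  have hUsymm : ∀ u, (U u)ᵀ = U u := fun u => by
    simp [hU, Matrix.transpose_sub, hS₁symm, hS₂symm]
  -- the derivative of U
  set D : ℝ → Matrix (Fin n) (Fin n) ℝ :=
    fun u => (S₁ u * A₁ u * S₁ u + R₁ u) - (S₂ u * A₂ u * S₂ u + R₂ u) with hD
  have hU' : ∀ u ∈ Icc t₀ T, ∀ i j, HasDerivAt (fun w => U w i j) (D u i j) u := by
    intro u hu i j
    have h2 := (hS₂ u hu i j).sub (hS₁ u hu i j)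
    have : (-(S₂ u * A₂ u * S₂ u + R₂ u)) i j - (-(S₁ u * A₁ u * S₁ u + R₁ u)) i j
        = D u i j := by
      simp [hD, Matrix.sub_apply, Matrix.neg_apply]; ring
    rw [this] at h2
    exact h2
  -- continuity of S-matrix entries is not needed separately; hU' gives it on Icc
  -- continuity of S entries on Icc
  have hS₁c : ∀ i j, ContinuousOn (fun u => S₁ u i j) (Icc t₀ T) :=
    fun i j u hu => ((hS₁ u hu i j).continuousAt).continuousWithinAt
  have hS₂c : ∀ i j, ContinuousOn (fun u => S₂ u i j) (Icc t₀ T) :=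
    fun i j u hu => ((hS₂ u hu i j).continuousAt).continuousWithinAt
  -- entry bound for the coupling matrix
  have hWcont : ∀ i j, ContinuousOn
      (fun u => (A₁ u * S₂ u + S₁ u * A₁ u) i j) (Icc t₀ T) := by
    intro i j
    have h1 : ContinuousOn (fun u => (A₁ u * S₂ u) i j) (Icc t₀ T) := by
      simp only [Matrix.mul_apply]
      exact continuousOn_finset_sum _ fun k _ =>
        ((hA₁cont i k).continuousOn).mul (hS₂c k j)
    have h2 : ContinuousOn (fun u => (S₁ u * A₁ u) i j) (Icc t₀ T) := by
      simp only [Matrix.mul_apply]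
      exact continuousOn_finset_sum _ fun k _ =>
        (hS₁c i k).mul ((hA₁cont k j).continuousOn)
    exact h1.add h2
  obtain ⟨Cw, hCw0, hCw⟩ := stmt4_entry_bound t₀ T (fun u => A₁ u * S₂ u + S₁ u * A₁ u) hWcont
  set K : ℝ := n * Cw + 1 with hKdef
  -- the perturbed matrices
  have key : ∀ ε > 0, ∀ u ∈ Icc t₀ T,
      (U u + (ε * Real.exp (K * (u - t₀))) • (1 : Matrix (Fin n) (Fin n) ℝ)).PosDef := by
    intro ε hε
    set V : ℝ → Matrix (Fin n) (Fin n) ℝ :=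
      fun u => U u + (ε * Real.exp (K * (u - t₀))) • (1 : Matrix (Fin n) (Fin n) ℝ) with hV
    show ∀ u ∈ Icc t₀ T, (V u).PosDef
    have hVsymm : ∀ u, (V u)ᵀ = V u := by
      intro u
      simp only [hV]
      simp [Matrix.transpose_add, Matrix.transpose_smul, hUsymm]
    have hquad : ∀ u (x : Fin n → ℝ),
        x ⬝ᵥ (V u) *ᵥ x = x ⬝ᵥ (U u) *ᵥ x + ε * Real.exp (K * (u - t₀)) * (x ⬝ᵥ x) := by
      intro u x
      simp only [hV]
      rw [Matrix.add_mulVec, dotProduct_add, Matrix.smul_mulVec,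
        Matrix.one_mulVec, dotProduct_smul, smul_eq_mul]
    have hqd : ∀ u ∈ Icc t₀ T, ∀ x : Fin n → ℝ,
        HasDerivAt (fun w => x ⬝ᵥ (V w) *ᵥ x)
          (x ⬝ᵥ (D u) *ᵥ x + ε * (Real.exp (K * (u - t₀)) * K) * (x ⬝ᵥ x)) u := by
      intro u hu x
      have h1 : HasDerivAt (fun w => x ⬝ᵥ (U w) *ᵥ x) (x ⬝ᵥ (D u) *ᵥ x) u :=
        stmt4_quad_deriv (hU' u hu) x
      have hlin : HasDerivAt (fun w => K * (w - t₀)) K u := by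
        simpa using ((hasDerivAt_id u).sub_const t₀).const_mul K
      have h2 : HasDerivAt (fun w => ε * Real.exp (K * (w - t₀)) * (x ⬝ᵥ x))
          (ε * (Real.exp (K * (u - t₀)) * K) * (x ⬝ᵥ x)) u :=
        ((hlin.exp).const_mul ε).mul_const _
      have h3 := h1.add h2
      have heq : (fun w => x ⬝ᵥ (V w) *ᵥ x)
          = fun w => x ⬝ᵥ (U w) *ᵥ x + ε * Real.exp (K * (w - t₀)) * (x ⬝ᵥ x) :=
        funext fun w => hquad w x
      rw [heq]
      exact h3
    have hUt₀ : U t₀ = S₂ t₀ - S₁ t₀ := by rw [hU]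
    have hPDt₀ : (V t₀).PosDef := by
      refine stmt4_pd_of (hVsymm t₀) fun x hx => ?_
      rw [hquad]
      have h1 : 0 ≤ x ⬝ᵥ (U t₀) *ᵥ x := stmt4_psd_quad (hUt₀ ▸ h0) x
      have h2 : 0 < x ⬝ᵥ x := stmt4_dp_self_pos hx
      have h3 : Real.exp (K * (t₀ - t₀)) = 1 := by simp
      rw [h3]
      nlinarith
    set E : Set ℝ := {u | u ∈ Icc t₀ T ∧ ∀ w ∈ Icc t₀ u, (V w).PosDef} with hE
    have ht₀E : t₀ ∈ E := by
      refine ⟨⟨le_refl _, ht₀T⟩, fun w hw => ?_⟩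
      have : w = t₀ := le_antisymm hw.2 hw.1
      rw [this]; exact hPDt₀
    have hbdd : BddAbove E := ⟨T, fun u hu => hu.1.2⟩
    have hEne : E.Nonempty := ⟨t₀, ht₀E⟩
    set s := sSup E with hs
    have hst₀ : t₀ ≤ s := le_csSup hbdd ht₀E
    have hsT : s ≤ T := csSup_le hEne fun u hu => hu.1.2
    have hsIcc : s ∈ Icc t₀ T := ⟨hst₀, hsT⟩
    have hltPD : ∀ u, t₀ ≤ u → u < s → (V u).PosDef := by
      intro u hu hus
      obtain ⟨b, hbE, hub⟩ := exists_lt_of_lt_csSup hEne hus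
      exact hbE.2 u ⟨hu, hub.le⟩
    have hsPD : (V s).PosDef := by
      rcases eq_or_lt_of_le hst₀ with heq | hlt
      · rw [← heq]; exact hPDt₀
      have hPSD : (V s).PosSemidef := by
        refine stmt4_psd_of (hVsymm s) fun x => ?_
        have hcont : ContinuousAt (fun w => x ⬝ᵥ (V w) *ᵥ x) s := (hqd s hsIcc x).continuousAt
        have htd : Tendsto (fun w => x ⬝ᵥ (V w) *ᵥ x) (𝓝[<] s) (𝓝 (x ⬝ᵥ (V s) *ᵥ x)) :=
          hcont.tendsto.mono_left nhdsWithin_le_nhds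
        have hmem : Ico t₀ s ∈ 𝓝[<] s := Ico_mem_nhdsLT_of_mem ⟨hlt, le_refl s⟩
        have hev : ∀ᶠ w in 𝓝[<] s, 0 ≤ x ⬝ᵥ (V w) *ᵥ x := by
          filter_upwards [hmem] with w hw
          exact stmt4_psd_quad (hltPD w hw.1 hw.2).posSemidef x
        exact ge_of_tendsto htd hev
      refine stmt4_pd_of (hVsymm s) fun x hx => ?_
      rcases lt_or_eq_of_le (stmt4_psd_quad hPSD x) with hpos | hzero
      · exact hpos
      exfalso
      have hnull : (V s) *ᵥ x = 0 := by
        refine (hPSD.dotProduct_mulVec_zero_iff x).mp ?_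
        simpa using hzero.symm
      set es : ℝ := Real.exp (K * (s - t₀)) with hes
      have hespos : 0 < es := Real.exp_pos _
      have hxx : 0 < x ⬝ᵥ x := stmt4_dp_self_pos hx
      have hUx : (U s) *ᵥ x = (-(ε * es)) • x := by
        have h2 : (U s) *ᵥ x + (ε * es) • x = 0 := by
          have h3 := hnull
          simp only [hV] at h3
          rw [Matrix.add_mulVec, Matrix.smul_mulVec, Matrix.one_mulVec] at h3
          rw [← hes] at h3
          exact h3
        have := eq_neg_of_add_eq_zero_left h2
        rw [this, neg_smul]
      have hUs : U s = S₂ s - S₁ s := by rw [hU]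
      have hid : D s = (R₁ s - R₂ s) + S₂ s * (A₁ s - A₂ s) * S₂ s
          - (S₂ s - S₁ s) * (A₁ s * S₂ s) - S₁ s * A₁ s * (S₂ s - S₁ s) := by
        rw [hD]; noncomm_ring
      have ht1 : 0 ≤ x ⬝ᵥ (R₁ s - R₂ s) *ᵥ x := stmt4_psd_quad (hR s hst₀) x
      have ht2 : 0 ≤ x ⬝ᵥ (S₂ s * (A₁ s - A₂ s) * S₂ s) *ᵥ x := by
        have heq2 : x ⬝ᵥ (S₂ s * (A₁ s - A₂ s) * S₂ s) *ᵥ x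
            = (S₂ s *ᵥ x) ⬝ᵥ (A₁ s - A₂ s) *ᵥ (S₂ s *ᵥ x) := by
          rw [← Matrix.mulVec_mulVec, ← Matrix.mulVec_mulVec,
            stmt4_sym_dp (hS₂symm s)]
        rw [heq2]
        exact stmt4_psd_quad (hA s hst₀) _
      have ht3 : x ⬝ᵥ ((S₂ s - S₁ s) * (A₁ s * S₂ s)) *ᵥ x
          = (-(ε * es)) * (x ⬝ᵥ (A₁ s * S₂ s) *ᵥ x) := by
        rw [← Matrix.mulVec_mulVec, ← hUs, stmt4_sym_dp (hUsymm s), hUx,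
          smul_dotProduct, smul_eq_mul]
      have ht4 : x ⬝ᵥ (S₁ s * A₁ s * (S₂ s - S₁ s)) *ᵥ x
          = (-(ε * es)) * (x ⬝ᵥ (S₁ s * A₁ s) *ᵥ x) := by
        rw [← Matrix.mulVec_mulVec, ← hUs, hUx, Matrix.mulVec_smul,
          dotProduct_smul, smul_eq_mul]
      have hdecomp : x ⬝ᵥ (D s) *ᵥ x
          = x ⬝ᵥ (R₁ s - R₂ s) *ᵥ x + x ⬝ᵥ (S₂ s * (A₁ s - A₂ s) * S₂ s) *ᵥ x
            + ε * es * (x ⬝ᵥ (A₁ s * S₂ s + S₁ s * A₁ s) *ᵥ x) := by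
        rw [hid, Matrix.sub_mulVec, Matrix.sub_mulVec, Matrix.add_mulVec,
          dotProduct_sub, dotProduct_sub, dotProduct_add, ht3, ht4,
          Matrix.add_mulVec, dotProduct_add]
        ring
      have hWb : |x ⬝ᵥ (A₁ s * S₂ s + S₁ s * A₁ s) *ᵥ x| ≤ n * Cw * (x ⬝ᵥ x) :=
        stmt4_quad_bound hCw0 (fun i j => hCw s hsIcc i j) x
      have hder := hqd s hsIcc x
      rw [← hes] at hder
      have hdpos : 0 < x ⬝ᵥ (D s) *ᵥ x + ε * (es * K) * (x ⬝ᵥ x) := by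
        rw [hdecomp, hKdef]
        have hW1 : -(n * Cw * (x ⬝ᵥ x)) ≤ x ⬝ᵥ (A₁ s * S₂ s + S₁ s * A₁ s) *ᵥ x :=
          (abs_le.mp hWb).1
        have hεes : 0 < ε * es := mul_pos hε hespos
        nlinarith [mul_le_mul_of_nonneg_left hW1 hεes.le, mul_pos hεes hxx]
      have hslope : Tendsto (slope (fun w => x ⬝ᵥ (V w) *ᵥ x) s) (𝓝[<] s)
          (𝓝 (x ⬝ᵥ (D s) *ᵥ x + ε * (es * K) * (x ⬝ᵥ x))) :=
        (hasDerivAt_iff_tendsto_slope.mp hder).mono_left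
          (nhdsWithin_mono s fun y hy => ne_of_lt hy)
      have hev1 : ∀ᶠ w in 𝓝[<] s, 0 < slope (fun w => x ⬝ᵥ (V w) *ᵥ x) s w :=
        hslope.eventually (eventually_gt_nhds hdpos)
      have hev2 : ∀ᶠ w in 𝓝[<] s, w ∈ Ico t₀ s :=
        Ico_mem_nhdsLT_of_mem ⟨hlt, le_refl s⟩
      obtain ⟨w, hw1, hw2⟩ := (hev1.and hev2).exists
      have hwlt : w < s := hw2.2
      have hgw : 0 < x ⬝ᵥ (V w) *ᵥ x := stmt4_pd_quad (hltPD w hw2.1 hwlt) hx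
      rw [slope_def_field] at hw1
      have hnum := mul_neg_of_pos_of_neg hw1 (sub_neg.mpr hwlt)
      rw [div_mul_cancel₀ _ (sub_ne_zero.mpr (ne_of_lt hwlt))] at hnum
      rw [← hzero] at hnum
      linarith
    have hsE : s ∈ E := by
      refine ⟨hsIcc, fun w hw => ?_⟩
      rcases lt_or_eq_of_le hw.2 with hlt2 | heq2
      · exact hltPD w hw.1 hlt2
      · rw [heq2]; exact hsPD
    by_cases hstrict : s < T
    · exfalso
      obtain ⟨c, hc, hcoer⟩ := stmt4_coercive hn (fun x hx => stmt4_pd_quad hsPD hx)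
      have hVcont : ∀ i j, ContinuousAt (fun w => V w i j) s := by
        intro i j
        have h1 : ContinuousAt (fun w => U w i j) s := (hU' s hsIcc i j).continuousAt
        have h2 : ContinuousAt (fun w => ε * Real.exp (K * (w - t₀)) *
            ((1 : Matrix (Fin n) (Fin n) ℝ) i j)) s := by
          refine ContinuousAt.mul ?_ continuousAt_const
          exact (continuous_const.mul (Real.continuous_exp.comp
            (continuous_const.mul (continuous_id.sub continuous_const)))).continuousAt
        have heq : (fun w => V w i j) = fun w => U w i j
            + ε * Real.exp (K * (w - t₀)) * ((1 : Matrix (Fin n) (Fin n) ℝ) i j) := by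
          funext w
          simp only [hV]
          simp [Matrix.add_apply, Matrix.smul_apply, smul_eq_mul]
        rw [heq]
        exact h1.add h2
      have hb : (0:ℝ) < c / (2 * n) := by positivity
      have hev : ∀ᶠ w in 𝓝 s, ∀ i j, |V w i j - V s i j| < c / (2 * n) := by
        rw [eventually_all]
        intro i
        rw [eventually_all]
        intro j
        exact (hVcont i j).eventually (eventually_abs_sub_lt _ hb)
      obtain ⟨δ, hδ, hball⟩ := Metric.eventually_nhds_iff.mp hev
      set t' := min T (s + δ / 2) with ht'
      have hst' : s < t' := lt_min hstrict (by linarith)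
      have ht'E : t' ∈ E := by
        refine ⟨⟨le_trans hst₀ hst'.le, min_le_left _ _⟩, fun w hw => ?_⟩
        rcases le_or_gt w s with hws | hws
        · exact hsE.2 w ⟨hw.1, hws⟩
        · refine stmt4_pd_of (hVsymm w) fun x hx => ?_
          have hdw : dist w s < δ := by
            rw [Real.dist_eq, abs_of_pos (by linarith : (0:ℝ) < w - s)]
            have hw2 : w ≤ s + δ / 2 := le_trans hw.2 (min_le_right _ _)
            linarith
          have hΔ := hball hdw
          have hsub : x ⬝ᵥ (V w - V s) *ᵥ x = x ⬝ᵥ (V w) *ᵥ x - x ⬝ᵥ (V s) *ᵥ x := by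
            rw [Matrix.sub_mulVec, dotProduct_sub]
          have hbound : |x ⬝ᵥ (V w - V s) *ᵥ x| ≤ n * (c / (2 * n)) * (x ⬝ᵥ x) :=
            stmt4_quad_bound hb.le
              (fun i j => by simpa [Matrix.sub_apply] using (hΔ i j).le) x
          have hco := hcoer x
          have hxx : 0 < x ⬝ᵥ x := stmt4_dp_self_pos hx
          have hnc : (n : ℝ) * (c / (2 * n)) = c / 2 := by
            field_simp
          rw [hnc] at hbound
          have habs := (abs_le.mp hbound).1
          rw [hsub] at habs
          nlinarith [mul_pos hc hxx]
      have hle := le_csSup hbdd ht'E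
      rw [← hs] at hle
      linarith
    · intro u hu
      have hsT' : s = T := le_antisymm hsT (not_lt.mp hstrict)
      exact hsE.2 u ⟨hu.1, hsT' ▸ hu.2⟩
  -- conclusion
  refine stmt4_psd_of (hUsymm t) fun x => ?_
  by_contra hneg
  push_neg at hneg
  have hxne : x ≠ 0 := by
    intro h; rw [h] at hneg; simp at hneg
  have hP : 0 < x ⬝ᵥ x := stmt4_dp_self_pos hxne
  set e : ℝ := Real.exp (K * (t - t₀)) with he
  have hepos : 0 < e := Real.exp_pos _
  set q : ℝ := x ⬝ᵥ (U t) *ᵥ x with hq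
  have hqneg : q < 0 := hneg
  set ε : ℝ := -q / (2 * e * (x ⬝ᵥ x)) with hε
  have hεpos : 0 < ε := by
    apply div_pos (by linarith) (by positivity)
  have hpd := key ε hεpos t ht
  have := stmt4_pd_quad hpd hxne
  rw [Matrix.add_mulVec, dotProduct_add, Matrix.smul_mulVec,
    Matrix.one_mulVec, dotProduct_smul, smul_eq_mul] at this
  have hεe : ε * e * (x ⬝ᵥ x) = -q / 2 := by
    rw [hε]; field_simp
  rw [← hq, ← he] at this
  nlinarith [this, hεe]
end

section
/- Scalar Riccati comparison with the model solution: let k > 0 and let S : (0, T) → Matrix (Fin n) (Fin n) ℝ be a symmetric-valued solution of S'(t) + S(t)² + R(t) = 0 with R(t) ≥ -k² • 1, such that S(t) ≤ k·coth(k t) • 1 near t = 0⁺. Then S(t) ≤ k·coth(k t) • 1 for all t in (0, T). -/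
open Matrix Set

/-- Derivative of the model function `k * coth (k t)` for `t > 0`. -/
lemma coth_hasDerivAt (k t : ℝ) (hk : 0 < k) (ht : 0 < t) :
    HasDerivAt (fun τ => k * (Real.cosh (k * τ) / Real.sinh (k * τ)))
      (k ^ 2 - (k * (Real.cosh (k * t) / Real.sinh (k * t))) ^ 2) t := by
  have hs : 0 < Real.sinh (k * t) := Real.sinh_pos_iff.mpr (mul_pos hk ht)
  have hlin : HasDerivAt (fun τ : ℝ => k * τ) k t := by
    simpa using (hasDerivAt_id t).const_mul k
  have hc : HasDerivAt (fun τ => Real.cosh (k * τ)) (Real.sinh (k * t) * k) t :=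
    (Real.hasDerivAt_cosh (k * t)).comp t hlin
  have hsd : HasDerivAt (fun τ => Real.sinh (k * τ)) (Real.cosh (k * t) * k) t :=
    (Real.hasDerivAt_sinh (k * t)).comp t hlin
  have h2 := (hc.fun_div hsd hs.ne').const_mul k
  refine h2.congr_deriv ?_
  field_simp

/-- Scalar comparison: if `g ≤ 0` near `0` and `g' ≤ 0` wherever `g ≥ 0`, then `g ≤ 0`. -/
lemma scalar_comparison (T : ℝ) (g g' : ℝ → ℝ)
    (hg : ∀ t ∈ Ioo (0 : ℝ) T, HasDerivAt g (g' t) t)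
    (hder : ∀ t ∈ Ioo (0 : ℝ) T, 0 ≤ g t → g' t ≤ 0)
    (ha : ∃ ε > 0, ∀ t ∈ Ioo (0 : ℝ) ε, g t ≤ 0) :
    ∀ t ∈ Ioo (0 : ℝ) T, g t ≤ 0 := by
  obtain ⟨ε, hε, hinit⟩ := ha
  intro t₀ ht₀
  by_contra hcon
  push_neg at hcon
  set a := min (ε / 2) (t₀ / 2) with ha_def
  have ha0 : 0 < a := lt_min (by linarith) (by linarith [ht₀.1])
  have haε : a < ε := lt_of_le_of_lt (min_le_left _ _) (by linarith)
  have hat₀ : a < t₀ := lt_of_le_of_lt (min_le_right _ _) (by linarith [ht₀.1])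
  have hga : g a ≤ 0 := hinit a ⟨ha0, haε⟩
  have hsub : Icc a t₀ ⊆ Ioo (0 : ℝ) T := fun x hx =>
    ⟨lt_of_lt_of_le ha0 hx.1, lt_of_le_of_lt hx.2 ht₀.2⟩
  have hcont : ContinuousOn g (Icc a t₀) := fun x hx =>
    ((hg x (hsub hx)).continuousAt).continuousWithinAt
  have hA_closed : IsClosed (Icc a t₀ ∩ g ⁻¹' (Iic 0)) :=
    hcont.preimage_isClosed_of_isClosed isClosed_Icc isClosed_Iic
  have hA_ne : (Icc a t₀ ∩ g ⁻¹' (Iic 0)).Nonempty :=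
    ⟨a, ⟨le_refl a, le_of_lt hat₀⟩, hga⟩
  have hA_bdd : BddAbove (Icc a t₀ ∩ g ⁻¹' (Iic 0)) := ⟨t₀, fun x hx => hx.1.2⟩
  obtain ⟨⟨has, hs_le⟩, hgs⟩ := hA_closed.csSup_mem hA_ne hA_bdd
  have hgs' : g (sSup (Icc a t₀ ∩ g ⁻¹' (Iic 0))) ≤ 0 := hgs
  have hs_lt : sSup (Icc a t₀ ∩ g ⁻¹' (Iic 0)) < t₀ :=
    lt_of_le_of_ne hs_le (fun heq => absurd (heq ▸ hgs') (not_le.mpr hcon))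
  have hpos : ∀ x ∈ Ioc (sSup (Icc a t₀ ∩ g ⁻¹' (Iic 0))) t₀, 0 < g x := by
    intro x hx
    by_contra hgx
    push_neg at hgx
    have hxA : x ∈ Icc a t₀ ∩ g ⁻¹' (Iic 0) := ⟨⟨le_trans has hx.1.le, hx.2⟩, hgx⟩
    exact absurd (le_csSup hA_bdd hxA) (not_le.mpr hx.1)
  have hanti : AntitoneOn g (Icc (sSup (Icc a t₀ ∩ g ⁻¹' (Iic 0))) t₀) := by
    apply antitoneOn_of_deriv_nonpos (convex_Icc _ t₀)
    · exact hcont.mono (Icc_subset_Icc_left has)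
    · intro x hx
      rw [interior_Icc] at hx
      have hxI : x ∈ Ioo (0 : ℝ) T := hsub ⟨le_trans has hx.1.le, hx.2.le⟩
      exact (hg x hxI).differentiableAt.differentiableWithinAt
    · intro x hx
      rw [interior_Icc] at hx
      have hxI : x ∈ Ioo (0 : ℝ) T := hsub ⟨le_trans has hx.1.le, hx.2.le⟩
      rw [(hg x hxI).deriv]
      exact hder x hxI (hpos x ⟨hx.1, hx.2.le⟩).le
  have := hanti (left_mem_Icc.mpr hs_le) (right_mem_Icc.mpr hs_le) hs_le
  linarith

theorem stmt5 (n : ℕ) (k T : ℝ) (hk : 0 < k)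
    (R S : ℝ → Matrix (Fin n) (Fin n) ℝ)
    (hRsymm : ∀ t, (R t)ᵀ = R t)
    (hSsymm : ∀ t, (S t)ᵀ = S t)
    (hRbound : ∀ t, (R t - (-(k ^ 2)) • (1 : Matrix (Fin n) (Fin n) ℝ)).PosSemidef)
    (hS : ∀ t ∈ Ioo (0 : ℝ) T, ∀ i j,
      HasDerivAt (fun τ => S τ i j) ((-(S t * S t + R t)) i j) t)
    (hinit : ∃ ε > 0, ∀ t ∈ Ioo (0 : ℝ) ε,
      ((k * (Real.cosh (k * t) / Real.sinh (k * t))) • (1 : Matrix (Fin n) (Fin n) ℝ)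
        - S t).PosSemidef) :
    ∀ t ∈ Ioo (0 : ℝ) T,
      ((k * (Real.cosh (k * t) / Real.sinh (k * t))) • (1 : Matrix (Fin n) (Fin n) ℝ)
        - S t).PosSemidef := by
  have hu_pos : ∀ t : ℝ, 0 < t → 0 < k * (Real.cosh (k * t) / Real.sinh (k * t)) :=
    fun t ht =>
      mul_pos hk (div_pos (Real.cosh_pos _) (Real.sinh_pos_iff.mpr (mul_pos hk ht)))
  -- key: for every vector x, the scalar function g is ≤ 0 on (0,T)
  have key : ∀ (x : Fin n → ℝ), ∀ t ∈ Ioo (0 : ℝ) T,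
      x ⬝ᵥ (S t) *ᵥ x
        - k * (Real.cosh (k * t) / Real.sinh (k * t)) * (x ⬝ᵥ x) ≤ 0 := by
    intro x
    have hc0 : 0 ≤ x ⬝ᵥ x := Finset.sum_nonneg fun i _ => mul_self_nonneg _
    have hdot : ∀ (M : Matrix (Fin n) (Fin n) ℝ),
        x ⬝ᵥ M *ᵥ x = ∑ i, ∑ j, x i * (M i j * x j) := by
      intro M; simp [dotProduct, mulVec, Finset.mul_sum]
    apply scalar_comparison T _ (fun t =>
      x ⬝ᵥ (-(S t * S t + R t)) *ᵥ x
        - (k ^ 2 - (k * (Real.cosh (k * t) / Real.sinh (k * t))) ^ 2) * (x ⬝ᵥ x))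
    · intro t ht
      have h1 : HasDerivAt (fun τ => x ⬝ᵥ (S τ) *ᵥ x)
          (x ⬝ᵥ (-(S t * S t + R t)) *ᵥ x) t := by
        rw [hdot]
        have heq : (fun τ => x ⬝ᵥ (S τ) *ᵥ x)
            = fun τ => ∑ i, ∑ j, x i * (S τ i j * x j) := by
          funext τ; exact hdot (S τ)
        rw [heq]
        apply HasDerivAt.fun_sum
        intro i _
        apply HasDerivAt.fun_sum
        intro j _
        exact ((hS t ht i j).mul_const (x j)).const_mul (x i)
      exact h1.sub ((coth_hasDerivAt k t hk ht.1).mul_const (x ⬝ᵥ x))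
    · intro t ht hgt
      rcases eq_or_lt_of_le hc0 with hc | hc
      · -- x ⬝ᵥ x = 0 forces x = 0
        have hx : x = 0 := by
          funext i
          have h0 : ∑ j, x j * x j = 0 := hc.symm
          have := (Finset.sum_eq_zero_iff_of_nonneg
            (fun j _ => mul_self_nonneg (x j))).mp h0 i (Finset.mem_univ i)
          exact mul_self_eq_zero.mp this
        simp [hx]
      · -- main case
        have hSq : x ⬝ᵥ (S t * S t) *ᵥ x = (S t *ᵥ x) ⬝ᵥ (S t *ᵥ x) := by
          rw [← mulVec_mulVec, dotProduct_mulVec, ← mulVec_transpose, hSsymm]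
        have hCS : (x ⬝ᵥ (S t) *ᵥ x) ^ 2 ≤ (x ⬝ᵥ x) * (x ⬝ᵥ (S t * S t) *ᵥ x) := by
          rw [hSq]
          have hcs := Finset.sum_mul_sq_le_sq_mul_sq Finset.univ x (S t *ᵥ x)
          have e1 : x ⬝ᵥ x = ∑ i, x i ^ 2 := by
            simp [dotProduct, sq]
          have e2 : (S t *ᵥ x) ⬝ᵥ (S t *ᵥ x) = ∑ i, (S t *ᵥ x) i ^ 2 := by
            simp [dotProduct, sq]
          have e3 : x ⬝ᵥ (S t) *ᵥ x = ∑ i, x i * (S t *ᵥ x) i := rfl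
          rw [e1, e2, e3]
          exact hcs
        have hR : -(k ^ 2 * (x ⬝ᵥ x)) ≤ x ⬝ᵥ (R t) *ᵥ x := by
          have h0 := (hRbound t).dotProduct_mulVec_nonneg x
          simp only [star_trivial] at h0
          rw [sub_mulVec, dotProduct_sub, smul_mulVec, one_mulVec,
            dotProduct_smul] at h0
          simp only [smul_eq_mul, neg_mul] at h0
          linarith
        have hu : 0 < k * (Real.cosh (k * t) / Real.sinh (k * t)) := hu_pos t ht.1
        have hup : k * (Real.cosh (k * t) / Real.sinh (k * t)) * (x ⬝ᵥ x)
            ≤ x ⬝ᵥ (S t) *ᵥ x := by linarith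
        have hq : (k * (Real.cosh (k * t) / Real.sinh (k * t))) ^ 2 * (x ⬝ᵥ x)
            ≤ x ⬝ᵥ (S t * S t) *ᵥ x := by
          have hp_nn : 0 ≤ x ⬝ᵥ (S t) *ᵥ x := le_trans (by positivity) hup
          nlinarith [hCS, sq_nonneg (x ⬝ᵥ (S t) *ᵥ x), mul_pos hu hc]
        have hexp : x ⬝ᵥ (-(S t * S t + R t)) *ᵥ x
            = -(x ⬝ᵥ (S t * S t) *ᵥ x) - x ⬝ᵥ (R t) *ᵥ x := by
          rw [neg_mulVec, dotProduct_neg, add_mulVec, dotProduct_add]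
          ring
        rw [hexp]
        nlinarith [hq, hR]
    · obtain ⟨ε, hε, h⟩ := hinit
      refine ⟨ε, hε, fun t ht => ?_⟩
      have h0 := (h t ht).dotProduct_mulVec_nonneg x
      simp only [star_trivial] at h0
      rw [sub_mulVec, dotProduct_sub, smul_mulVec, one_mulVec,
        dotProduct_smul] at h0
      simp only [smul_eq_mul] at h0
      linarith
  intro t ht
  refine Matrix.PosSemidef.of_dotProduct_mulVec_nonneg ?_ ?_
  · -- Hermitian
    rw [Matrix.IsHermitian, conjTranspose_eq_transpose_of_trivial, transpose_sub,
      transpose_smul, transpose_one, hSsymm]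
  · intro x
    have hx := key x t ht
    simp only [star_trivial]
    rw [sub_mulVec, dotProduct_sub, smul_mulVec, one_mulVec, dotProduct_smul]
    simp only [smul_eq_mul]
    linarith
end

section
/- Let U : ℝ → Matrix (Fin n) (Fin n) ℝ be a symmetric-valued solution of U'(t) + U(t)² + R(t) = 0 on all of ℝ, with -K₂² • 1 ≥ R(t) ≥ -K₁² • 1 for constants K₁ ≥ K₂ ≥ 0, and suppose -K₂ • 1 ≥ U(t) ≥ -K₁ • 1 for all t. Let D : ℝ → Matrix (Fin n) (Fin n) ℝ solve D'(t) = U(t) * D(t), D(0) = 1. Then for every vector b and every t ≥ 0: ‖b‖·exp(-K₁ t) ≤ ‖D(t) b‖ ≤ ‖b‖·exp(-K₂ t). -/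
open Matrix

theorem stmt7 (n : ℕ) (K₁ K₂ : ℝ) (hK : K₂ ≤ K₁) (hK₂ : 0 ≤ K₂)
    (R U D : ℝ → Matrix (Fin n) (Fin n) ℝ)
    (hUsymm : ∀ t, (U t)ᵀ = U t)
    (hRupper : ∀ t, ((-(K₂ ^ 2)) • (1 : Matrix (Fin n) (Fin n) ℝ) - R t).PosSemidef)
    (hRlower : ∀ t, (R t - (-(K₁ ^ 2)) • (1 : Matrix (Fin n) (Fin n) ℝ)).PosSemidef)
    (hUupper : ∀ t, ((-K₂) • (1 : Matrix (Fin n) (Fin n) ℝ) - U t).PosSemidef)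
    (hUlower : ∀ t, (U t - (-K₁) • (1 : Matrix (Fin n) (Fin n) ℝ)).PosSemidef)
    (hU : ∀ t i j, HasDerivAt (fun τ => U τ i j) ((-(U t * U t + R t)) i j) t)
    (hD : ∀ t i j, HasDerivAt (fun τ => D τ i j) ((U t * D t) i j) t)
    (hD0 : D 0 = 1) :
    ∀ (b : EuclideanSpace ℝ (Fin n)) (t : ℝ), 0 ≤ t →
      ‖b‖ * Real.exp (-K₁ * t) ≤ ‖Matrix.toEuclideanLin (D t) b‖ ∧
      ‖Matrix.toEuclideanLin (D t) b‖ ≤ ‖b‖ * Real.exp (-K₂ * t) := by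
  intro b t ht
  set b' : Fin n → ℝ := (WithLp.equiv 2 (Fin n → ℝ)) b with hb'
  set x : ℝ → Fin n → ℝ := fun τ => D τ *ᵥ b' with hx
  set f : ℝ → ℝ := fun τ => x τ ⬝ᵥ x τ with hf
  -- component derivatives
  have hxder : ∀ τ i, HasDerivAt (fun s => x s i) ((U τ *ᵥ x τ) i) τ := by
    intro τ i
    have e : (U τ *ᵥ x τ) i = ((U τ * D τ) *ᵥ b') i := by rw [hx, mulVec_mulVec]
    rw [e]
    simp only [hx, mulVec, dotProduct]
    exact HasDerivAt.fun_sum fun j _ => (hD τ i j).mul_const (b' j)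
  have hfder : ∀ τ, HasDerivAt f (2 * (x τ ⬝ᵥ (U τ *ᵥ x τ))) τ := by
    intro τ
    have h1 : ∀ i, HasDerivAt (fun s => x s i * x s i)
        (2 * (x τ i * (U τ *ᵥ x τ) i)) τ := fun i => by
      have := (hxder τ i).fun_mul (hxder τ i)
      exact this.congr_deriv (by ring)
    have h2 : HasDerivAt (fun s => ∑ i, x s i * x s i)
        (∑ i, 2 * (x τ i * (U τ *ᵥ x τ) i)) τ :=
      HasDerivAt.fun_sum fun i _ => h1 i
    have e2 : (2 : ℝ) * (x τ ⬝ᵥ (U τ *ᵥ x τ)) = ∑ i, 2 * (x τ i * (U τ *ᵥ x τ) i) := by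
      rw [dotProduct, Finset.mul_sum]
    rw [e2]
    exact h2
  have hfnonneg : ∀ τ, 0 ≤ f τ := fun τ =>
    Finset.sum_nonneg fun i _ => mul_self_nonneg _
  -- inner product bounds
  have hub : ∀ τ, x τ ⬝ᵥ (U τ *ᵥ x τ) ≤ -K₂ * f τ := by
    intro τ
    have h := (hUupper τ).dotProduct_mulVec_nonneg (x τ)
    simp only [star_trivial, sub_mulVec, smul_mulVec, one_mulVec, dotProduct_sub,
      dotProduct_smul, smul_eq_mul] at h
    linarith
  have hlb : ∀ τ, -K₁ * f τ ≤ x τ ⬝ᵥ (U τ *ᵥ x τ) := by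
    intro τ
    have h := (hUlower τ).dotProduct_mulVec_nonneg (x τ)
    simp only [star_trivial, sub_mulVec, smul_mulVec, one_mulVec, dotProduct_sub,
      dotProduct_smul, smul_eq_mul] at h
    linarith
  -- auxiliary exponential derivative
  have hexp : ∀ (c τ : ℝ), HasDerivAt (fun s => Real.exp (c * s)) (Real.exp (c * τ) * c) τ := by
    intro c τ
    have := ((hasDerivAt_id τ).const_mul c).exp
    simpa using this
  -- monotone: f τ * exp (2K₁ τ) nondecreasing
  have hmono : Monotone (fun τ => f τ * Real.exp (2 * K₁ * τ)) := by
    apply monotone_of_deriv_nonneg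
    · exact fun τ => ((hfder τ).mul (hexp (2 * K₁) τ)).differentiableAt
    · intro τ
      rw [((hfder τ).fun_mul (hexp (2 * K₁) τ)).deriv]
      have h1 := hlb τ
      have h2 := Real.exp_pos (2 * K₁ * τ)
      nlinarith [mul_le_mul_of_nonneg_right h1 h2.le]
  have hanti : Antitone (fun τ => f τ * Real.exp (2 * K₂ * τ)) := by
    apply antitone_of_deriv_nonpos
    · exact fun τ => ((hfder τ).mul (hexp (2 * K₂) τ)).differentiableAt
    · intro τ
      rw [((hfder τ).fun_mul (hexp (2 * K₂) τ)).deriv]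
      have h1 := hub τ
      have h2 := Real.exp_pos (2 * K₂ * τ)
      nlinarith [mul_le_mul_of_nonneg_right h1 h2.le]
  have hf0 : f 0 = b' ⬝ᵥ b' := by simp [hf, hx, hD0]
  have H1 : f 0 ≤ f t * Real.exp (2 * K₁ * t) := by
    have := hmono ht
    simpa [hf0] using this
  have H2 : f t * Real.exp (2 * K₂ * t) ≤ f 0 := by
    have := hanti ht
    simpa [hf0] using this
  -- norms as sqrt of f
  have hvnorm : ‖(Matrix.toEuclideanLin (D t)) b‖ ^ 2 = f t := by
    rw [EuclideanSpace.norm_eq, Real.sq_sqrt (Finset.sum_nonneg fun i _ => by positivity)]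
    simp only [hf, dotProduct]
    apply Finset.sum_congr rfl
    intro i _
    rw [Matrix.toEuclideanLin_apply]
    simp [Real.norm_eq_abs, sq_abs, hx, hb', sq]
  have hbnorm : ‖b‖ ^ 2 = f 0 := by
    rw [EuclideanSpace.norm_eq, Real.sq_sqrt (Finset.sum_nonneg fun i _ => by positivity)]
    rw [hf0]; simp only [dotProduct]
    apply Finset.sum_congr rfl
    intro i _
    simp [Real.norm_eq_abs, sq_abs, hb', sq]
  have E1 : Real.exp (-K₁ * t) ^ 2 * Real.exp (2 * K₁ * t) = 1 := by
    rw [sq, ← Real.exp_add, ← Real.exp_add]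
    ring_nf
    exact Real.exp_zero
  have E2 : Real.exp (-K₂ * t) ^ 2 * Real.exp (2 * K₂ * t) = 1 := by
    rw [sq, ← Real.exp_add, ← Real.exp_add]
    ring_nf
    exact Real.exp_zero
  constructor
  · have key : (‖b‖ * Real.exp (-K₁ * t)) ^ 2 ≤ ‖(Matrix.toEuclideanLin (D t)) b‖ ^ 2 := by
      rw [mul_pow, hvnorm, hbnorm]
      nlinarith [mul_le_mul_of_nonneg_right H1 (sq_nonneg (Real.exp (-K₁ * t))), E1,
        Real.exp_pos (2 * K₁ * t)]
    have := Real.sqrt_le_sqrt key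
    rwa [Real.sqrt_sq (by positivity), Real.sqrt_sq (norm_nonneg _)] at this
  · have key : ‖(Matrix.toEuclideanLin (D t)) b‖ ^ 2 ≤ (‖b‖ * Real.exp (-K₂ * t)) ^ 2 := by
      rw [mul_pow, hvnorm, hbnorm]
      nlinarith [mul_le_mul_of_nonneg_right H2 (sq_nonneg (Real.exp (-K₂ * t))), E2,
        Real.exp_pos (2 * K₂ * t)]
    have := Real.sqrt_le_sqrt key
    rwa [Real.sqrt_sq (norm_nonneg _), Real.sqrt_sq (by positivity)] at this
end

section
/- Let U : ℝ → Matrix (Fin n) (Fin n) ℝ be symmetric-valued, continuous, with U(t) ≤ -k • 1 for all t ≥ 0 and some k > 0, and let D solve D' = U D, D(0) = 1. Then for every vector b and t ≥ 0, ‖D(t) b‖ ≤ ‖b‖ e^{-kt}; in particular D(t) → 0 as t → ∞. -/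
open Matrix Filter Topology

theorem key (n : ℕ) (k : ℝ) (hk : 0 < k)
    (U D : ℝ → Matrix (Fin n) (Fin n) ℝ)
    (hUbound : ∀ t, 0 ≤ t → ((-k) • (1 : Matrix (Fin n) (Fin n) ℝ) - U t).PosSemidef)
    (hD : ∀ t i j, HasDerivAt (fun τ => D τ i j) ((U t * D t) i j) t)
    (hD0 : D 0 = 1)
    (b : Fin n → ℝ) (t : ℝ) (ht : 0 ≤ t) :
    ∑ i, (D t *ᵥ b) i ^ 2 ≤ Real.exp (-(2*k)*t) * ∑ i, (b i) ^ 2 := by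
  set x : ℝ → Fin n → ℝ := fun τ => D τ *ᵥ b with hxdef
  set f : ℝ → ℝ := fun τ => ∑ i, x τ i ^ 2 with hfdef
  have hx : ∀ τ i, HasDerivAt (fun s => x s i) ((U τ *ᵥ x τ) i) τ := by
    intro τ i
    have h1 : HasDerivAt (fun s => x s i) (((U τ * D τ) *ᵥ b) i) τ := by
      simp only [hxdef, mulVec, dotProduct]
      exact HasDerivAt.fun_sum fun j _ => (hD τ i j).mul_const (b j)
    have : (U τ * D τ) *ᵥ b = U τ *ᵥ x τ := by
      rw [hxdef]; rw [← mulVec_mulVec]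
    rwa [this] at h1
  have hf : ∀ τ, HasDerivAt f (2 * (x τ ⬝ᵥ (U τ *ᵥ x τ))) τ := by
    intro τ
    have : HasDerivAt f (∑ i, (2 * x τ i ^ 1 * (U τ *ᵥ x τ) i)) τ :=
      HasDerivAt.fun_sum fun i _ => (hx τ i).pow 2
    convert this using 1
    simp only [pow_one, dotProduct, Finset.mul_sum]
    exact Finset.sum_congr rfl fun i _ => by ring
  set g : ℝ → ℝ := fun τ => Real.exp (2*k*τ) * f τ with hgdef
  have hg : ∀ τ, HasDerivAt g
      (2*k*Real.exp (2*k*τ) * f τ + Real.exp (2*k*τ) * (2 * (x τ ⬝ᵥ (U τ *ᵥ x τ)))) τ := by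
    intro τ
    have he : HasDerivAt (fun s => Real.exp (2*k*s)) (Real.exp (2*k*τ) * (2*k)) τ := by
      simpa using ((hasDerivAt_id τ).const_mul (2*k)).exp
    have := he.fun_mul (hf τ)
    refine this.congr_deriv ?_
    ring
  have hgdiff : ∀ τ, DifferentiableAt ℝ g τ := fun τ => (hg τ).differentiableAt
  have hanti : AntitoneOn g (Set.Ici 0) := by
    apply antitoneOn_of_deriv_nonpos (convex_Ici 0)
      (Continuous.continuousOn (continuous_iff_continuousAt.2 fun τ => (hgdiff τ).continuousAt))
      (fun τ _ => (hgdiff τ).differentiableWithinAt)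
    intro τ hτ
    rw [interior_Ici] at hτ
    rw [(hg τ).deriv]
    have hτ0 : (0:ℝ) ≤ τ := le_of_lt hτ
    have h := (hUbound τ hτ0).dotProduct_mulVec_nonneg (x τ)
    simp only [star_trivial, sub_mulVec, dotProduct_sub, smul_mulVec, one_mulVec,
      dotProduct_smul, smul_eq_mul, sub_nonneg] at h
    have hd : x τ ⬝ᵥ x τ = f τ := by simp [hfdef, dotProduct, sq]
    have hexp : (0:ℝ) < Real.exp (2*k*τ) := Real.exp_pos _
    have h2 : x τ ⬝ᵥ U τ *ᵥ x τ ≤ -k * f τ := by rw [← hd]; exact h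
    nlinarith [mul_le_mul_of_nonneg_left h2 hexp.le]
  have hg0 : g 0 = ∑ i, (b i) ^ 2 := by
    simp [hgdef, hfdef, hxdef, hD0, one_mulVec]
  have := hanti (Set.self_mem_Ici) (Set.mem_Ici.2 ht) ht
  rw [hg0] at this
  have hexp : (0:ℝ) < Real.exp (2*k*t) := Real.exp_pos _
  have : f t ≤ Real.exp (-(2*k)*t) * ∑ i, (b i) ^ 2 := by
    rw [neg_mul, Real.exp_neg]
    rw [hgdef] at this
    simp only at this
    calc f t = (Real.exp (2*k*t))⁻¹ * (Real.exp (2*k*t) * f t) := by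
          field_simp
      _ ≤ (Real.exp (2*k*t))⁻¹ * ∑ i, (b i)^2 := by
          apply mul_le_mul_of_nonneg_left this (by positivity)
  exact this

theorem stmt8 (n : ℕ) (k : ℝ) (hk : 0 < k)
    (U D : ℝ → Matrix (Fin n) (Fin n) ℝ)
    (hUsymm : ∀ t, (U t)ᵀ = U t)
    (hUcont : ∀ i j, Continuous fun t => U t i j)
    (hUbound : ∀ t, 0 ≤ t → ((-k) • (1 : Matrix (Fin n) (Fin n) ℝ) - U t).PosSemidef)
    (hD : ∀ t i j, HasDerivAt (fun τ => D τ i j) ((U t * D t) i j) t)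
    (hD0 : D 0 = 1) :
    (∀ (b : EuclideanSpace ℝ (Fin n)) (t : ℝ), 0 ≤ t →
      ‖Matrix.toEuclideanLin (D t) b‖ ≤ ‖b‖ * Real.exp (-k * t)) ∧
    (∀ i j, Tendsto (fun t => D t i j) atTop (𝓝 0)) := by
  have hsqrt : ∀ t : ℝ, Real.sqrt (Real.exp (-(2*k)*t)) = Real.exp (-k*t) := by
    intro t
    rw [show (-(2*k)*t) = (-k*t) + (-k*t) by ring, Real.exp_add, ← sq,
      Real.sqrt_sq (Real.exp_nonneg _)]
  constructor
  · intro b t ht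
    have hkey := key n k hk U D hUbound hD hD0 (fun j => b j) t ht
    have hnorm1 : ‖Matrix.toEuclideanLin (D t) b‖
        = Real.sqrt (∑ i, (D t *ᵥ fun j => b j) i ^ 2) := by
      rw [EuclideanSpace.norm_eq]
      congr 1
      refine Finset.sum_congr rfl fun i _ => ?_
      rw [Real.norm_eq_abs, sq_abs]
      simp only [Matrix.toEuclideanLin_apply]
    have hnorm2 : ‖b‖ = Real.sqrt (∑ j, (b j) ^ 2) := by
      rw [EuclideanSpace.norm_eq]
      congr 1
      exact Finset.sum_congr rfl fun j _ => by rw [Real.norm_eq_abs, sq_abs]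
    rw [hnorm1, hnorm2]
    calc Real.sqrt (∑ i, (D t *ᵥ fun j => b j) i ^ 2)
        ≤ Real.sqrt (Real.exp (-(2*k)*t) * ∑ j, (b j) ^ 2) := Real.sqrt_le_sqrt hkey
      _ = Real.exp (-k*t) * Real.sqrt (∑ j, (b j) ^ 2) := by
          rw [Real.sqrt_mul (Real.exp_nonneg _), hsqrt]
      _ = Real.sqrt (∑ j, (b j) ^ 2) * Real.exp (-k*t) := by ring
  · intro i j
    refine squeeze_zero_norm' (a := fun t => Real.exp (-k*t)) ?_ ?_
    · filter_upwards [eventually_ge_atTop (0:ℝ)] with t ht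
      have hkey := key n k hk U D hUbound hD hD0 (Pi.single j 1) t ht
      have h1 : ∑ l, (Pi.single j 1 : Fin n → ℝ) l ^ 2 = 1 := by
        simp [Pi.single_apply, Finset.sum_ite_eq']
      rw [h1, mul_one] at hkey
      have h2 : (D t *ᵥ Pi.single j 1) i = D t i j := by
        simp [mulVec, dotProduct, Pi.single_apply, Finset.sum_ite_eq']
      have h3 : (D t i j) ^ 2 ≤ Real.exp (-(2*k)*t) := by
        rw [← h2]
        refine le_trans ?_ hkey
        exact Finset.single_le_sum (f := fun l => (D t *ᵥ Pi.single j 1) l ^ 2)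
          (fun l _ => sq_nonneg _) (Finset.mem_univ i)
      calc ‖D t i j‖ = Real.sqrt ((D t i j)^2) := by
            rw [Real.sqrt_sq_eq_abs, Real.norm_eq_abs]
        _ ≤ Real.sqrt (Real.exp (-(2*k)*t)) := Real.sqrt_le_sqrt h3
        _ = Real.exp (-k*t) := hsqrt t
    · have h1 : Tendsto (fun t : ℝ => -k*t) atTop atBot := by
        have h2 : Tendsto (fun t : ℝ => k*t) atTop atTop :=
          Tendsto.const_mul_atTop hk tendsto_id
        exact (tendsto_neg_atTop_atBot.comp h2).congr fun t => by simp [Function.comp, neg_mul]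
      exact Real.tendsto_exp_atBot.comp h1
end

section
/- Blow-up of Jacobi solutions: let B : [0,∞) → Matrix (Fin n) (Fin n) ℝ solve B'' + R B = 0 with B(0) = 0, B'(0) = 1, R symmetric-valued with R(t) ≥ -k² • 1 (k > 0), B(t) invertible for all t > 0, and suppose M(t) := ∫_t^∞ B(τ)⁻¹ (B(τ)⁻¹)ᵀ dτ converges and tends to 0 as t → ∞, with S(t) - U⁺(t) = (B(t)⁻¹)ᵀ M(t)⁻¹ B(t)⁻¹ bounded in operator norm by 4k for t large. Then for every K > 0 there is T > 0 such that ‖B(t) v‖ ≥ K ‖v‖ for all v and all t ≥ T. -/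
open Matrix MeasureTheory Filter Topology
open scoped RealInnerProductSpace

theorem stmt9 (n : ℕ) (k : ℝ) (hk : 0 < k)
    (R B B' : ℝ → Matrix (Fin n) (Fin n) ℝ)
    (M : ℝ → Matrix (Fin n) (Fin n) ℝ)
    (hRsymm : ∀ t, (R t)ᵀ = R t)
    (hRbound : ∀ t, 0 ≤ t → (R t - (-(k ^ 2)) • (1 : Matrix (Fin n) (Fin n) ℝ)).PosSemidef)
    (hB : ∀ t i j, HasDerivAt (fun τ => B τ i j) (B' t i j) t)
    (hB' : ∀ t i j, HasDerivAt (fun τ => B' τ i j) ((-(R t * B t)) i j) t)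
    (hB0 : B 0 = 0) (hB'0 : B' 0 = 1)
    (hinv : ∀ t : ℝ, 0 < t → IsUnit (B t).det)
    (hMdef : ∀ t : ℝ, 0 < t → ∀ i j,
      M t i j = ∫ τ in Set.Ioi t, ((B τ)⁻¹ * ((B τ)⁻¹)ᵀ) i j)
    (hMint : ∀ t : ℝ, 0 < t → ∀ i j,
      IntegrableOn (fun τ => ((B τ)⁻¹ * ((B τ)⁻¹)ᵀ) i j) (Set.Ioi t))
    (hMlim : ∀ i j, Tendsto (fun t => M t i j) atTop (𝓝 0))
    (hbound : ∃ t₀ : ℝ, 0 < t₀ ∧ ∀ t : ℝ, t₀ ≤ t →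
      ‖(Matrix.toEuclideanCLM (𝕜 := ℝ)
          (((B t)⁻¹)ᵀ * (M t)⁻¹ * (B t)⁻¹) : EuclideanSpace ℝ (Fin n) →L[ℝ] EuclideanSpace ℝ (Fin n))‖
        ≤ 4 * k) :
    ∀ K : ℝ, 0 < K → ∃ T : ℝ, 0 < T ∧ ∀ (v : EuclideanSpace ℝ (Fin n)) (t : ℝ), T ≤ t →
      K * ‖v‖ ≤ ‖Matrix.toEuclideanLin (B t) v‖ := by
  intro K hK
  obtain ⟨t₀, ht₀, hb⟩ := hbound
  set g : Matrix (Fin n) (Fin n) ℝ →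
      (EuclideanSpace ℝ (Fin n) →L[ℝ] EuclideanSpace ℝ (Fin n)) :=
    fun X => Matrix.toEuclideanCLM (𝕜 := ℝ) X with hg
  -- Step A : M t is positive definite for t > 0
  have hMpd : ∀ t : ℝ, 0 < t → (M t).PosDef := by
    intro t ht
    have hquad : ∀ (A : Matrix (Fin n) (Fin n) ℝ) (y : Fin n → ℝ),
        ∑ i, ∑ j, y i * (A i j * y j) = y ⬝ᵥ A *ᵥ y := by
      intro A y
      simp [dotProduct, Matrix.mulVec, Finset.mul_sum]
    have hCC : ∀ (C : Matrix (Fin n) (Fin n) ℝ) (y : Fin n → ℝ),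
        y ⬝ᵥ (C * Cᵀ) *ᵥ y = (Cᵀ *ᵥ y) ⬝ᵥ (Cᵀ *ᵥ y) := by
      intro C y
      rw [← Matrix.mulVec_mulVec, Matrix.dotProduct_mulVec, Matrix.mulVec_transpose]
    rw [Matrix.posDef_iff_dotProduct_mulVec]
    constructor
    · -- Hermitian
      ext i j
      rw [Matrix.conjTranspose_apply, star_trivial, hMdef t ht i j, hMdef t ht j i]
      congr 1
      ext τ
      simp only [Matrix.mul_apply, Matrix.transpose_apply]
      exact Finset.sum_congr rfl fun l _ => mul_comm _ _
    · intro x hx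
      have hsx : star x = x := by
        funext i; exact star_trivial _
      rw [hsx]
      have int1 : ∀ i j, IntegrableOn
          (fun τ => x i * (((B τ)⁻¹ * ((B τ)⁻¹)ᵀ) i j * x j)) (Set.Ioi t) :=
        fun i j => ((hMint t ht i j).mul_const _).const_mul _
      have key : x ⬝ᵥ M t *ᵥ x
          = ∫ τ in Set.Ioi t, ((((B τ)⁻¹)ᵀ *ᵥ x) ⬝ᵥ ((((B τ)⁻¹)ᵀ) *ᵥ x)) := by
        calc x ⬝ᵥ M t *ᵥ x = ∑ i, ∑ j, x i * (M t i j * x j) := (hquad _ _).symm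
          _ = ∑ i, ∑ j, ∫ τ in Set.Ioi t,
              x i * (((B τ)⁻¹ * ((B τ)⁻¹)ᵀ) i j * x j) := by
            refine Finset.sum_congr rfl fun i _ => Finset.sum_congr rfl fun j _ => ?_
            rw [hMdef t ht i j, MeasureTheory.integral_const_mul,
              MeasureTheory.integral_mul_const]
          _ = ∫ τ in Set.Ioi t, ∑ i, ∑ j,
              x i * (((B τ)⁻¹ * ((B τ)⁻¹)ᵀ) i j * x j) := by
            rw [MeasureTheory.integral_finset_sum _
              (fun i _ => integrable_finset_sum _ (fun j _ => int1 i j))]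
            exact Finset.sum_congr rfl fun i _ =>
              (MeasureTheory.integral_finset_sum _ (fun j _ => int1 i j)).symm
          _ = _ := by
            refine setIntegral_congr_fun measurableSet_Ioi fun τ _ => ?_
            rw [hquad, hCC]
      rw [key]
      have hwne : ∀ τ, τ ∈ Set.Ioi t → (((B τ)⁻¹)ᵀ *ᵥ x) ≠ 0 := by
        intro τ hτ hw0
        have hdet := hinv τ (lt_trans ht hτ)
        have : (B τ)ᵀ *ᵥ (((B τ)⁻¹)ᵀ *ᵥ x) = x := by
          rw [Matrix.mulVec_mulVec, ← Matrix.transpose_mul,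
            Matrix.nonsing_inv_mul _ hdet, Matrix.transpose_one, Matrix.one_mulVec]
        rw [hw0, Matrix.mulVec_zero] at this
        exact hx this.symm
      have hnonneg : ∀ τ, 0 ≤ ((((B τ)⁻¹)ᵀ *ᵥ x) ⬝ᵥ ((((B τ)⁻¹)ᵀ) *ᵥ x)) := by
        intro τ
        exact Finset.sum_nonneg fun l _ => mul_self_nonneg _
      have hint : IntegrableOn
          (fun τ => ((((B τ)⁻¹)ᵀ *ᵥ x) ⬝ᵥ ((((B τ)⁻¹)ᵀ) *ᵥ x))) (Set.Ioi t) := by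
        have : (fun τ => ((((B τ)⁻¹)ᵀ *ᵥ x) ⬝ᵥ ((((B τ)⁻¹)ᵀ) *ᵥ x)))
            = fun τ => ∑ i, ∑ j, x i * (((B τ)⁻¹ * ((B τ)⁻¹)ᵀ) i j * x j) := by
          funext τ; rw [hquad, hCC]
        rw [this]
        exact integrable_finset_sum _ fun i _ =>
          integrable_finset_sum _ fun j _ => int1 i j
      refine (setIntegral_pos_iff_support_of_nonneg_ae
        (Filter.Eventually.of_forall fun τ => hnonneg τ) hint).2 ?_
      have hsub : Set.Ioi t ⊆
          Function.support (fun τ => ((((B τ)⁻¹)ᵀ *ᵥ x) ⬝ᵥ ((((B τ)⁻¹)ᵀ) *ᵥ x)))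
            ∩ Set.Ioi t := by
        intro τ hτ
        refine ⟨?_, hτ⟩
        have := lt_of_le_of_ne (hnonneg τ)
          (fun h => hwne τ hτ (dotProduct_self_eq_zero.mp h.symm))
        exact ne_of_gt this
      calc (0 : ENNReal) < ⊤ := by simp
        _ = volume (Set.Ioi t) := (Real.volume_Ioi).symm
        _ ≤ _ := measure_mono hsub
  -- Step B : operator norm of M t tends to 0
  have hM0 : Tendsto M atTop (𝓝 (0 : Matrix (Fin n) (Fin n) ℝ)) := by
    refine tendsto_pi_nhds.2 ?_
    intro i
    rw [tendsto_pi_nhds]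
    intro j
    exact hMlim i j
  have hgcont : Continuous g := by
    have : IsLinearMap ℝ g := ⟨fun X Y => map_add _ X Y, fun c X => map_smul _ c X⟩
    exact (IsLinearMap.mk' g this).continuous_of_finiteDimensional
  have hNlim : Tendsto (fun t => ‖g (M t)‖) atTop (𝓝 0) := by
    have h3 : g 0 = 0 := _root_.map_zero (Matrix.toEuclideanCLM (𝕜 := ℝ))
    have h1 : Tendsto (fun t => g (M t)) atTop (𝓝 (g 0)) :=
      (hgcont.tendsto 0).comp hM0
    rw [h3] at h1
    have h4 := h1.norm
    rwa [norm_zero] at h4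
  have hε : (0 : ℝ) < 1 / (4 * k * K ^ 2) := by positivity
  obtain ⟨T₁, hT₁⟩ := eventually_atTop.mp (hNlim.eventually_le_const hε)
  refine ⟨max t₀ T₁, lt_of_lt_of_le ht₀ (le_max_left _ _), ?_⟩
  intro v t ht
  have htt₀ : t₀ ≤ t := le_trans (le_max_left _ _) ht
  have htpos : 0 < t := lt_of_lt_of_le ht₀ htt₀
  have hdet := hinv t htpos
  have hm := hMpd t htpos
  have hmdet : IsUnit (M t).det := hm.det_pos.ne'.isUnit
  set m := M t with hmdef
  set c := (B t)⁻¹ with hc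
  set u : EuclideanSpace ℝ (Fin n) := Matrix.toEuclideanLin (B t) v with hu
  -- adjoint identity
  have hadj : ∀ (X : Matrix (Fin n) (Fin n) ℝ) (a b : EuclideanSpace ℝ (Fin n)),
      ⟪g Xᵀ a, b⟫ = ⟪a, g X b⟫ := by
    intro X a b
    have h1 : g Xᵀ = star (g X) := by
      show Matrix.toEuclideanCLM (𝕜 := ℝ) Xᵀ
        = star (Matrix.toEuclideanCLM (𝕜 := ℝ) X)
      rw [← StarHomClass.map_star]
      congr 1
    rw [h1, ContinuousLinearMap.star_eq_adjoint, ContinuousLinearMap.adjoint_inner_left]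
  have hadj' : ∀ (X : Matrix (Fin n) (Fin n) ℝ) (a b : EuclideanSpace ℝ (Fin n)),
      ⟪g X a, b⟫ = ⟪a, g Xᵀ b⟫ := by
    intro X a b
    conv_lhs => rw [show X = Xᵀᵀ from (Matrix.transpose_transpose X).symm]
    exact hadj Xᵀ a b
  have hmulapp : ∀ (X Y : Matrix (Fin n) (Fin n) ℝ) (a : EuclideanSpace ℝ (Fin n)),
      g (X * Y) a = g X (g Y a) := by
    intro X Y a
    show Matrix.toEuclideanCLM (𝕜 := ℝ) (X * Y) a = _
    rw [_root_.map_mul]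
    rfl
  -- v = g c u
  have hvx : g c u = v := by
    have h1 : g (B t) v = u := by
      show Matrix.toEuclideanCLM (𝕜 := ℝ) (B t) v = Matrix.toEuclideanLin (B t) v
      exact LinearMap.congr_fun (Matrix.coe_toEuclideanCLM_eq_toEuclideanLin (B t)) v
    rw [← h1, ← hmulapp, hc, Matrix.nonsing_inv_mul _ hdet]
    show Matrix.toEuclideanCLM (𝕜 := ℝ) (1 : Matrix (Fin n) (Fin n) ℝ) v = v
    rw [_root_.map_one]
    rfl
  set x : EuclideanSpace ℝ (Fin n) := g c u with hxdef
  set y : EuclideanSpace ℝ (Fin n) := g m⁻¹ x with hy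
  -- square root of m
  obtain ⟨s, hss, hst⟩ : ∃ s : Matrix (Fin n) (Fin n) ℝ, s * s = m ∧ sᵀ = s := by
    open scoped MatrixOrder in
    refine ⟨CFC.sqrt m, CFC.sqrt_mul_sqrt_self m hm.posSemidef.nonneg, ?_⟩
    rw [← Matrix.conjTranspose_eq_transpose_of_trivial]
    open scoped MatrixOrder in
    exact (CFC.sqrt_nonneg m).posSemidef.1
  have hxm : g m y = x := by
    rw [hy, ← hmulapp, Matrix.mul_nonsing_inv _ hmdet]
    show Matrix.toEuclideanCLM (𝕜 := ℝ) (1 : Matrix (Fin n) (Fin n) ℝ) x = x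
    rw [_root_.map_one]
    rfl
  have hsadj : ∀ a b : EuclideanSpace ℝ (Fin n), ⟪g s a, b⟫ = ⟪a, g s b⟫ := by
    intro a b
    have h := hadj s a b
    rwa [hst] at h
  -- main estimates
  have e1 : ‖x‖ ^ 2 ≤ ‖g s y‖ * ‖g s x‖ := by
    have h : ⟪x, x⟫ = ⟪g s y, g s x⟫ := by
      nth_rewrite 1 [← hxm]
      rw [← hss, hmulapp, hsadj]
    rw [← real_inner_self_eq_norm_sq, h]
    exact real_inner_le_norm _ _
  have e2 : ‖g s y‖ ^ 2 ≤ 4 * k * ‖u‖ ^ 2 := by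
    have h1 : ⟪g s y, g s y⟫ = ⟪u, g (cᵀ * m⁻¹ * c) u⟫ := by
      rw [hsadj, ← hmulapp, hss, hxm, real_inner_comm]
      calc ⟪x, y⟫ = ⟪g c u, g (m⁻¹ * c) u⟫ := by rw [hy, hxdef, ← hmulapp]
        _ = ⟪u, g (cᵀ * (m⁻¹ * c)) u⟫ := by rw [hadj' c, ← hmulapp]
        _ = _ := by rw [mul_assoc]
    have h2 : ⟪u, g (cᵀ * m⁻¹ * c) u⟫ ≤ 4 * k * ‖u‖ ^ 2 := by
      calc ⟪u, g (cᵀ * m⁻¹ * c) u⟫ ≤ ‖u‖ * ‖g (cᵀ * m⁻¹ * c) u‖ :=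
            real_inner_le_norm _ _
        _ ≤ ‖u‖ * (‖g (cᵀ * m⁻¹ * c)‖ * ‖u‖) := by
            gcongr
            exact ContinuousLinearMap.le_opNorm _ _
        _ ≤ ‖u‖ * (4 * k * ‖u‖) := by
            have hb' : ‖g (cᵀ * m⁻¹ * c)‖ ≤ 4 * k := hb t htt₀
            exact mul_le_mul_of_nonneg_left
              (mul_le_mul_of_nonneg_right hb' (norm_nonneg _)) (norm_nonneg _)
        _ = 4 * k * ‖u‖ ^ 2 := by ring
    rw [← real_inner_self_eq_norm_sq, h1]
    exact h2
  have e3 : ‖g s x‖ ^ 2 ≤ ‖g m‖ * ‖x‖ ^ 2 := by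
    have h1 : ⟪g s x, g s x⟫ = ⟪x, g m x⟫ := by
      rw [hsadj, ← hmulapp, hss]
    calc ‖g s x‖ ^ 2 = ⟪x, g m x⟫ := by rw [← real_inner_self_eq_norm_sq, h1]
      _ ≤ ‖x‖ * ‖g m x‖ := real_inner_le_norm _ _
      _ ≤ ‖x‖ * (‖g m‖ * ‖x‖) := by
          gcongr
          exact ContinuousLinearMap.le_opNorm _ _
      _ = ‖g m‖ * ‖x‖ ^ 2 := by ring
  have e5 : ‖g m‖ ≤ 1 / (4 * k * K ^ 2) := hT₁ t (le_trans (le_max_right _ _) ht)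
  -- combine
  have e6 : (‖x‖ ^ 2) ^ 2 ≤ (‖g s y‖ * ‖g s x‖) ^ 2 :=
    pow_le_pow_left₀ (sq_nonneg _) e1 2
  have e7 : (‖g s y‖ * ‖g s x‖) ^ 2 ≤ (4 * k * ‖u‖ ^ 2) * (‖g m‖ * ‖x‖ ^ 2) := by
    rw [mul_pow]
    exact mul_le_mul e2 e3 (sq_nonneg _) (by positivity)
  have e8 : (4 * k * ‖u‖ ^ 2) * (‖g m‖ * ‖x‖ ^ 2)
      ≤ (4 * k * ‖u‖ ^ 2) * ((1 / (4 * k * K ^ 2)) * ‖x‖ ^ 2) := by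
    gcongr
  have e9 : (4 * k * ‖u‖ ^ 2) * ((1 / (4 * k * K ^ 2)) * ‖x‖ ^ 2)
      = ‖u‖ ^ 2 * ‖x‖ ^ 2 / K ^ 2 := by
    field_simp
  have e10 : K ^ 2 * ((‖x‖ ^ 2) ^ 2) ≤ ‖u‖ ^ 2 * ‖x‖ ^ 2 := by
    calc K ^ 2 * ((‖x‖ ^ 2) ^ 2) ≤ K ^ 2 * (‖u‖ ^ 2 * ‖x‖ ^ 2 / K ^ 2) := by
          gcongr
          exact le_trans e6 (le_trans e7 (le_trans e8 (le_of_eq e9)))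
      _ = ‖u‖ ^ 2 * ‖x‖ ^ 2 := by field_simp
  rw [← hvx]
  by_cases hx0 : ‖x‖ = 0
  · rw [hx0, mul_zero]
    exact norm_nonneg _
  · have hx0' : 0 < ‖x‖ := lt_of_le_of_ne (norm_nonneg x) (Ne.symm hx0)
    have hxpos : 0 < ‖x‖ ^ 2 := by positivity
    have e11 : (K * ‖x‖) ^ 2 ≤ ‖u‖ ^ 2 := by
      have h10 : (K ^ 2 * ‖x‖ ^ 2) * ‖x‖ ^ 2 ≤ ‖u‖ ^ 2 * ‖x‖ ^ 2 := by
        calc (K ^ 2 * ‖x‖ ^ 2) * ‖x‖ ^ 2 = K ^ 2 * ((‖x‖ ^ 2) ^ 2) := by ring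
          _ ≤ _ := e10
      have h := le_of_mul_le_mul_right h10 hxpos
      calc (K * ‖x‖) ^ 2 = K ^ 2 * ‖x‖ ^ 2 := mul_pow K _ 2
        _ ≤ ‖u‖ ^ 2 := h
    exact (pow_le_pow_iff_left₀ (by positivity) (norm_nonneg u) two_ne_zero).mp e11
end

section
/- Canonical frame existence: let J : ℝ → Lagrangian Grassmannian of (V, ω) be a regular curve (the canonical bilinear form ⟨·,·⟩^t is positive definite for each t), and let ẽ¹(t),…,ẽⁿ(t) be a smooth ⟨·,·⟩^t-orthonormal frame of J(t). Define Ω(t)_{ij} = ω(ẽ̇ⁱ(t), ẽ̇ʲ(t)) (a skew-symmetric matrix) and let U solve U' = (1/2) U Ω with U(0) orthogonal. Then the frame e(t) = U(t)·ẽ(t), together with f i(t) = ėⁱ(t), forms a Darboux basis of V for each t: ω(eⁱ, eʲ) = 0, ω(f i, f j) = 0, ω(f i, eʲ) = δ_{ij}. -/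
open Matrix

theorem stmt11 {V : Type*} [NormedAddCommGroup V] [NormedSpace ℝ V]
    [FiniteDimensional ℝ V]
    (n : ℕ) (hdim : Module.finrank ℝ V = 2 * n)
    (ω : V →ₗ[ℝ] V →ₗ[ℝ] ℝ)
    (hskew : ∀ x y, ω x y = -ω y x)
    (et et' : Fin n → ℝ → V)
    (het : ∀ i t, HasDerivAt (et i) (et' i t) t)
    (hiso : ∀ t i j, ω (et i t) (et j t) = 0)
    (horth : ∀ t i j, ω (et' i t) (et j t) = if i = j then 1 else 0)
    (Ω U : ℝ → Matrix (Fin n) (Fin n) ℝ)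
    (hΩ : ∀ t i j, Ω t i j = ω (et' i t) (et' j t))
    (hU : ∀ t i j, HasDerivAt (fun s => U s i j) (((1/2 : ℝ) • (U t * Ω t)) i j) t)
    (hU0 : U 0 * (U 0)ᵀ = 1)
    (e f : Fin n → ℝ → V)
    (hedef : ∀ i t, e i t = ∑ k, U t i k • et k t)
    (hf : ∀ i t, HasDerivAt (e i) (f i t) t) :
    ∀ t i j,
      ω (e i t) (e j t) = 0 ∧
      ω (f i t) (f j t) = 0 ∧
      ω (f i t) (e j t) = if i = j then 1 else 0 := by
  have hΩskew : ∀ t k l, Ω t k l = -Ω t l k := by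
    intro t k l; rw [hΩ, hΩ, hskew]
  have hback : ∀ t k l, ω (et k t) (et' l t) = -(if l = k then (1:ℝ) else 0) := by
    intro t k l; rw [hskew, horth]
  -- key cancellation
  have hcancel : ∀ s : ℝ, ∀ i j,
      (∑ k, ∑ m, U s i k * U s j m * Ω s m k)
        = -∑ k, ∑ m, U s i m * Ω s m k * U s j k := by
    intro s i j
    rw [Finset.sum_comm]
    rw [← Finset.sum_neg_distrib]
    refine Finset.sum_congr rfl fun k _ => ?_
    rw [← Finset.sum_neg_distrib]
    refine Finset.sum_congr rfl fun m _ => ?_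
    rw [hΩskew s m k]; ring
  have hUU : ∀ t i j, (∑ k, U t i k * U t j k) = if i = j then (1:ℝ) else 0 := by
    intro t i j
    have hderiv : ∀ s, HasDerivAt (fun s => ∑ k, U s i k * U s j k) 0 s := by
      intro s
      have h1 : HasDerivAt (fun s => ∑ k, U s i k * U s j k)
          (∑ k, (((1/2:ℝ) • (U s * Ω s)) i k * U s j k
            + U s i k * ((1/2:ℝ) • (U s * Ω s)) j k)) s :=
        HasDerivAt.fun_sum fun k _ => (hU s i k).mul (hU s j k)
      have h2 : (∑ k, (((1/2:ℝ) • (U s * Ω s)) i k * U s j k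
            + U s i k * ((1/2:ℝ) • (U s * Ω s)) j k)) = 0 := by
        have e1 : ∀ a b k, ((1/2:ℝ) • (U s * Ω s)) a k * U s b k
            = (1/2:ℝ) * ∑ m, U s a m * Ω s m k * U s b k := by
          intro a b k
          simp [Matrix.mul_apply, smul_eq_mul, Finset.sum_mul, mul_assoc]
        have e2 : ∀ k, U s i k * ((1/2:ℝ) • (U s * Ω s)) j k
            = (1/2:ℝ) * ∑ m, U s i k * U s j m * Ω s m k := by
          intro k
          simp [Matrix.mul_apply, smul_eq_mul, Finset.mul_sum]
          ring_nf
        simp only [e1, e2, ← Finset.mul_sum, Finset.sum_add_distrib]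
        rw [hcancel]
        ring
      rwa [h2] at h1
    have hconst : (∑ k, U t i k * U t j k) = (∑ k, U 0 i k * U 0 j k) := by
      have hd : Differentiable ℝ (fun s => ∑ k, U s i k * U s j k) :=
        fun s => (hderiv s).differentiableAt
      exact is_const_of_deriv_eq_zero hd (fun s => (hderiv s).deriv) t 0
    rw [hconst]
    have h0 : (U 0 * (U 0)ᵀ) i j = (1 : Matrix (Fin n) (Fin n) ℝ) i j := by rw [hU0]
    simpa [Matrix.mul_apply, Matrix.transpose_apply, Matrix.one_apply] using h0
  have hfd : ∀ i t, f i t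
      = ∑ k, (U t i k • et' k t + ((1/2:ℝ) • (U t * Ω t)) i k • et k t) := by
    intro i t
    have h1 : HasDerivAt (fun s => ∑ k, U s i k • et k s)
        (∑ k, (U t i k • et' k t + ((1/2:ℝ) • (U t * Ω t)) i k • et k t)) t :=
      HasDerivAt.fun_sum fun k _ => (hU t i k).smul (het k t)
    have h2 : (fun s => ∑ k, U s i k • et k s) = e i := by
      funext s; rw [hedef]
    rw [h2] at h1
    exact (hf i t).unique h1
  intro t i j
  refine ⟨?_, ?_, ?_⟩
  · rw [hedef, hedef]
    simp [map_sum, _root_.map_smul, hiso]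
  · rw [hfd, hfd]
    simp only [map_sum, map_add, _root_.map_smul, LinearMap.sum_apply, LinearMap.add_apply,
      LinearMap.smul_apply, smul_eq_mul, hiso, horth, hback, ← hΩ, mul_zero, mul_ite, mul_one,
      mul_neg, Finset.sum_ite_eq, Finset.mem_univ, if_true, zero_add]
    have hd : ∀ a x, ((1/2:ℝ) • (U t * Ω t)) a x = (1/2:ℝ) * ∑ m, U t a m * Ω t m x := by
      intro a x; simp [Matrix.mul_apply, smul_eq_mul]
    simp only [add_zero, Finset.sum_ite_eq', Finset.sum_neg_distrib, Finset.mem_univ, if_true,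
      hd, mul_ite, mul_zero, Finset.sum_ite_eq, Finset.mul_sum, Finset.sum_mul, mul_add,
      add_mul, Finset.sum_add_distrib, mul_neg, neg_mul]
    have h1 : (∑ x, ∑ m, U t j x * (U t i m * Ω t m x))
        = ∑ x, ∑ m, U t i m * Ω t m x * U t j x :=
      Finset.sum_congr rfl fun x _ => Finset.sum_congr rfl fun m _ => by ring
    have h2 : (∑ x, ∑ m, U t j x * (1/2 * (U t i m * Ω t m x)))
        = (1/2:ℝ) * ∑ x, ∑ m, U t i m * Ω t m x * U t j x := by
      rw [Finset.mul_sum]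
      refine Finset.sum_congr rfl fun x _ => ?_
      rw [Finset.mul_sum]
      exact Finset.sum_congr rfl fun m _ => by ring
    have h3 : (∑ x, ∑ m, 1/2 * (U t j m * Ω t m x) * U t i x)
        = (1/2:ℝ) * ∑ x, ∑ m, U t i x * U t j m * Ω t m x := by
      rw [Finset.mul_sum]
      refine Finset.sum_congr rfl fun x _ => ?_
      rw [Finset.mul_sum]
      exact Finset.sum_congr rfl fun m _ => by ring
    rw [h1, h2, h3, hcancel t i j]
    ring
  · rw [hfd, hedef]
    simp only [map_sum, map_add, _root_.map_smul, LinearMap.sum_apply, LinearMap.add_apply,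
      LinearMap.smul_apply, smul_eq_mul, hiso, horth, mul_zero, mul_ite, mul_one,
      Finset.sum_ite_eq, Finset.mem_univ, if_true, zero_add]
    simp only [add_zero, Finset.sum_ite_eq', Finset.mem_univ, if_true]
    rw [← hUU t i j]
    exact Finset.sum_congr rfl fun k _ => mul_comm _ _
end

section
/- Uniqueness of canonical frames: if e(t) = (e¹(t),…,eⁿ(t)) and ē(t) are two smooth frames of a regular curve J(t) in the Lagrangian Grassmannian such that in both cases (eⁱ(t), ėⁱ(t)) and (ēⁱ(t), ē̇ⁱ(t)) form Darboux bases of V for every t, then there exists a constant orthogonal matrix U with ē(t) = U e(t) for all t. -/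
open Matrix

private lemma det_diffAt {N : ℕ} {m : ℝ → Matrix (Fin N) (Fin N) ℝ} {t₀ : ℝ}
    (h : ∀ i j, DifferentiableAt ℝ (fun t => m t i j) t₀) :
    DifferentiableAt ℝ (fun t => (m t).det) t₀ := by
  simp only [Matrix.det_apply, Units.smul_def, zsmul_eq_mul]
  apply DifferentiableAt.fun_sum
  intro σ _
  exact ((DifferentiableAt.fun_finsetProd (u := Finset.univ)
    (fun i _ => h (σ i) i))).const_mul _

private lemma adj_diffAt {N : ℕ} {m : ℝ → Matrix (Fin N) (Fin N) ℝ} {t₀ : ℝ}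
    (h : ∀ i j, DifferentiableAt ℝ (fun t => m t i j) t₀) (i j : Fin N) :
    DifferentiableAt ℝ (fun t => (m t).adjugate i j) t₀ := by
  simp only [Matrix.adjugate_apply]
  apply det_diffAt
  intro a b
  simp only [Matrix.updateRow_apply]
  by_cases hab : a = j
  · simp [hab]
  · simpa [hab] using h a b

theorem stmt12 {V : Type*} [NormedAddCommGroup V] [NormedSpace ℝ V]
    [FiniteDimensional ℝ V]
    (n : ℕ) (hdim : Module.finrank ℝ V = 2 * n)
    (ω : V →ₗ[ℝ] V →ₗ[ℝ] ℝ)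
    (hskew : ∀ x y, ω x y = -ω y x)
    (J : ℝ → Submodule ℝ V)
    (e eb : Fin n → ℝ → V) (f fb : Fin n → ℝ → V)
    (hf : ∀ i t, HasDerivAt (e i) (f i t) t)
    (hfb : ∀ i t, HasDerivAt (eb i) (fb i t) t)
    (hbasis : ∀ t, LinearIndependent ℝ fun i => e i t)
    (hbasisb : ∀ t, LinearIndependent ℝ fun i => eb i t)
    (hspan : ∀ t, J t = Submodule.span ℝ (Set.range fun i => e i t))
    (hspanb : ∀ t, J t = Submodule.span ℝ (Set.range fun i => eb i t))
    (hiso : ∀ t i j, ω (e i t) (e j t) = 0)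
    (hisob : ∀ t i j, ω (eb i t) (eb j t) = 0)
    (horth : ∀ t i j, ω (f i t) (e j t) = if i = j then 1 else 0)
    (horthb : ∀ t i j, ω (fb i t) (eb j t) = if i = j then 1 else 0)
    (hff : ∀ t i j, ω (f i t) (f j t) = 0)
    (hffb : ∀ t i j, ω (fb i t) (fb j t) = 0) :
    ∃ U : Matrix (Fin n) (Fin n) ℝ, U * Uᵀ = 1 ∧
      ∀ t i, eb i t = ∑ j, U i j • e j t := by
  classical
  -- a continuous bilinear incarnation of ω
  let ω₁ : V →ₗ[ℝ] (V →L[ℝ] ℝ) :=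
    (LinearMap.toContinuousLinearMap : (V →ₗ[ℝ] ℝ) ≃ₗ[ℝ] (V →L[ℝ] ℝ)).toLinearMap.comp ω
  let B : V →L[ℝ] (V →L[ℝ] ℝ) := LinearMap.toContinuousLinearMap ω₁
  have hB : ∀ x y, B x y = ω x y := fun x y => rfl
  have hderivω : ∀ (a b : ℝ → V) (a' b' : V) (t : ℝ), HasDerivAt a a' t → HasDerivAt b b' t →
      HasDerivAt (fun s => ω (a s) (b s)) (ω a' (b t) + ω (a t) b') t := by
    intro a b a' b' t ha hb
    have h1 : HasDerivAt (fun s => B (a s)) (B a') t :=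
      B.hasFDerivAt.comp_hasDerivAt t ha
    have h2 := h1.clm_apply hb
    simpa [hB] using h2
  -- the transition matrix
  set U : ℝ → Matrix (Fin n) (Fin n) ℝ := fun t i j => ω (f j t) (eb i t) with hUdef
  have hUa : ∀ t i j, U t i j = ω (f j t) (eb i t) := fun t i j => rfl
  -- step 1 : expansion of eb in terms of e
  have hexp : ∀ t i, eb i t = ∑ j, U t i j • e j t := by
    intro t i
    have hmem : eb i t ∈ Submodule.span ℝ (Set.range fun k => e k t) := by
      rw [← hspan t, hspanb t]
      exact Submodule.subset_span ⟨i, rfl⟩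
    obtain ⟨c, hc⟩ := (Submodule.mem_span_range_iff_exists_fun ℝ).mp hmem
    have hcj : ∀ j, U t i j = c j := by
      intro j
      rw [hUa, ← hc]
      simp [map_sum, _root_.map_smul, horth t, mul_ite]
    rw [← hc]
    exact Finset.sum_congr rfl fun j _ => by rw [hcj j]
  -- step 2 : ω (fb i) (e j) = U i j
  have hU2 : ∀ t i j, ω (fb i t) (e j t) = U t i j := by
    intro t i j
    have hzero : (fun s => ω (eb i s) (e j s)) = fun _ => (0 : ℝ) := by
      funext s
      rw [hexp s i]
      simp [map_sum, hiso s]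
    have h0 : HasDerivAt (fun s => ω (eb i s) (e j s)) 0 t := by
      rw [hzero]; exact hasDerivAt_const t 0
    have h1 := hderivω (eb i) (e j) (fb i t) (f j t) t (hfb i t) (hf j t)
    have hsum := h1.unique h0
    have h2 : ω (eb i t) (f j t) = - U t i j := by
      rw [hexp t i]
      have : ∀ k, ω (e k t) (f j t) = -(if j = k then (1:ℝ) else 0) := by
        intro k; rw [hskew, horth t]
      simp [map_sum, this, mul_ite, hUa]
    rw [h2] at hsum
    linarith
  -- U t is orthogonal for each t
  have hUorth : ∀ t, U t * (U t)ᵀ = 1 := by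
    intro t
    ext i j
    have h := horthb t i j
    rw [hexp t j] at h
    simp only [map_sum, _root_.map_smul, smul_eq_mul, hU2 t] at h
    simp only [Matrix.mul_apply, Matrix.transpose_apply, Matrix.one_apply]
    rw [← h]
    exact Finset.sum_congr rfl fun k _ => mul_comm _ _
  -- differentiability of U
  have hdiffU : ∀ i j, Differentiable ℝ (fun t => U t i j) := by
    intro i j t₀
    set m : ℝ → Matrix (Fin n) (Fin n) ℝ := fun t a b => ω (f a t₀) (e b t) with hm
    have hmdiff : ∀ a b s, DifferentiableAt ℝ (fun t => m t a b) s := by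
      intro a b s
      exact (hderivω (fun _ => f a t₀) (e b) 0 (f b s) s (hasDerivAt_const s _)
        (hf b s)).differentiableAt
    have hm0 : m t₀ = 1 := by
      ext a b; simp [hm, horth t₀, Matrix.one_apply]
    have hdet : ∀ s, DifferentiableAt ℝ (fun t => (m t).det) s :=
      fun s => det_diffAt (fun a b => hmdiff a b s)
    have hdet0 : (m t₀).det ≠ 0 := by simp [hm0]
    have hne : ∀ᶠ t in nhds t₀, (m t).det ≠ 0 :=
      (hdet t₀).continuousAt.eventually_ne hdet0
    have hvdiff : ∀ k s, DifferentiableAt ℝ (fun t => ω (f k t₀) (eb i t)) s := by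
      intro k s
      exact (hderivω (fun _ => f k t₀) (eb i) 0 (fb i s) s (hasDerivAt_const s _)
        (hfb i s)).differentiableAt
    have hform : ∀ᶠ t in nhds t₀,
        U t i j = ∑ k, (m t)⁻¹ j k * ω (f k t₀) (eb i t) := by
      filter_upwards [hne] with t hdet_t
      have hmv : m t *ᵥ (fun k => U t i k) = fun a => ω (f a t₀) (eb i t) := by
        funext a
        simp only [Matrix.mulVec, dotProduct]
        rw [hexp t i]
        simp only [map_sum, _root_.map_smul, smul_eq_mul, hm]
        exact Finset.sum_congr rfl fun k _ => mul_comm _ _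
      have hinv := Matrix.nonsing_inv_mul (m t) (isUnit_iff_ne_zero.mpr hdet_t)
      have : U t i j = ((m t)⁻¹ *ᵥ (m t *ᵥ fun k => U t i k)) j := by
        rw [Matrix.mulVec_mulVec, hinv, Matrix.one_mulVec]
      rw [this, hmv]
      simp [Matrix.mulVec, dotProduct]
    have hrhs : DifferentiableAt ℝ
        (fun t => ∑ k, (m t)⁻¹ j k * ω (f k t₀) (eb i t)) t₀ := by
      apply DifferentiableAt.fun_sum
      intro k _
      refine DifferentiableAt.mul ?_ (hvdiff k t₀)
      have hform2 : (fun t => (m t)⁻¹ j k) = fun t => ((m t).det)⁻¹ * (m t).adjugate j k := by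
        funext t
        rw [Matrix.inv_def]
        simp [Ring.inverse_eq_inv']
      rw [hform2]
      exact ((hdet t₀).inv hdet0).mul (adj_diffAt (fun a b => hmdiff a b t₀) j k)
    exact hrhs.congr_of_eventuallyEq hform
  -- the derivative of U vanishes
  have hderiv0 : ∀ t₀ i j, deriv (fun t => U t i j) t₀ = 0 := by
    intro t₀
    set u : Matrix (Fin n) (Fin n) ℝ := fun i j => deriv (fun t => U t i j) t₀ with hu
    have hUd : ∀ i j, HasDerivAt (fun t => U t i j) (u i j) t₀ :=
      fun i j => (hdiffU i j t₀).hasDerivAt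
    have hfb' : ∀ i, fb i t₀ = ∑ k, (U t₀ i k • f k t₀ + u i k • e k t₀) := by
      intro i
      have h1 : HasDerivAt (fun t => ∑ k, U t i k • e k t)
          (∑ k, (U t₀ i k • f k t₀ + u i k • e k t₀)) t₀ :=
        HasDerivAt.fun_sum fun k _ => (hUd i k).smul (hf k t₀)
      have h2 : (fun t => ∑ k, U t i k • e k t) = eb i := by
        funext t; rw [← hexp t i]
      rw [h2] at h1
      exact (hfb i t₀).unique h1
    have ωef : ∀ k l, ω (e k t₀) (f l t₀) = -(if l = k then (1:ℝ) else 0) := by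
      intro k l; rw [hskew, horth t₀]
    have hPQ : ∀ i j, ∑ k, U t₀ i k * u j k = ∑ k, u i k * U t₀ j k := by
      intro i j
      have h0 := hffb t₀ i j
      rw [hfb' i, hfb' j] at h0
      simp only [map_sum, map_add, _root_.map_smul, LinearMap.sum_apply, LinearMap.add_apply,
        LinearMap.smul_apply, smul_eq_mul, hiso t₀, hff t₀, horth t₀, ωef,
        mul_ite, mul_one, mul_zero, mul_neg, Finset.sum_add_distrib, Finset.sum_neg_distrib,
        Finset.sum_ite_eq, Finset.sum_ite_eq', Finset.mem_univ, if_true,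
        Finset.sum_const_zero, add_zero, zero_add] at h0
      have e1 : ∑ x, U t₀ j x * u i x = ∑ x, u i x * U t₀ j x :=
        Finset.sum_congr rfl fun k _ => mul_comm _ _
      have e2 : ∑ x, u j x * U t₀ i x = ∑ x, U t₀ i x * u j x :=
        Finset.sum_congr rfl fun k _ => mul_comm _ _
      linarith [e1, e2, h0]
    have hPQ2 : ∀ i j, (∑ k, u i k * U t₀ j k) + (∑ k, U t₀ i k * u j k) = 0 := by
      intro i j
      have hcf : (fun t => ∑ k, U t i k * U t j k) = fun _ => if i = j then (1:ℝ) else 0 := by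
        funext t
        have h := congrArg (fun M => M i j) (hUorth t)
        simpa [Matrix.mul_apply, Matrix.one_apply] using h
      have h1 : HasDerivAt (fun t => ∑ k, U t i k * U t j k)
          (∑ k, (u i k * U t₀ j k + U t₀ i k * u j k)) t₀ :=
        HasDerivAt.fun_sum fun k _ => (hUd i k).mul (hUd j k)
      have h2 : HasDerivAt (fun t => ∑ k, U t i k * U t j k) 0 t₀ := by
        rw [hcf]; exact hasDerivAt_const _ _
      have h3 := h1.unique h2
      rw [Finset.sum_add_distrib] at h3
      linarith
    have hP0 : u * (U t₀)ᵀ = 0 := by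
      ext i j
      have h1 := hPQ i j
      have h2 := hPQ2 i j
      simp only [Matrix.mul_apply, Matrix.transpose_apply, Matrix.zero_apply]
      linarith
    have hu0 : u = 0 := by
      have h3 : (U t₀)ᵀ * U t₀ = 1 := mul_eq_one_comm.mp (hUorth t₀)
      calc u = u * ((U t₀)ᵀ * U t₀) := by rw [h3, Matrix.mul_one]
        _ = (u * (U t₀)ᵀ) * U t₀ := by rw [Matrix.mul_assoc]
        _ = 0 := by rw [hP0, Matrix.zero_mul]
    intro i j
    show u i j = 0
    rw [hu0]
    rfl
  have hconst : ∀ t i j, U t i j = U 0 i j := fun t i j =>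
    is_const_of_deriv_eq_zero (hdiffU i j) (fun x => hderiv0 x i j) t 0
  refine ⟨U 0, hUorth 0, ?_⟩
  intro t i
  rw [hexp t i]
  exact Finset.sum_congr rfl fun j _ => by rw [hconst t i j]
end

section
/- Structural equation: let e¹(t),…,eⁿ(t), f¹(t) = ė¹(t),…,fⁿ(t) = ėⁿ(t) be a canonical frame of a regular curve J in the Lagrangian Grassmannian of (V, ω) (so these form a Darboux basis for every t). Then ëⁱ(t) ∈ J(t) for every i and t, so there is a linear operator R(t) : J(t) → J(t) with ḟⁱ(t) = -R(t) eⁱ(t); moreover R(t) is symmetric with respect to the canonical inner product ⟨·,·⟩^t. -/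
open Matrix

theorem stmt13 {V : Type*} [NormedAddCommGroup V] [NormedSpace ℝ V]
    [FiniteDimensional ℝ V]
    (n : ℕ) (hdim : Module.finrank ℝ V = 2 * n)
    (ω : V →ₗ[ℝ] V →ₗ[ℝ] ℝ)
    (hskew : ∀ x y, ω x y = -ω y x)
    (J : ℝ → Submodule ℝ V)
    (e f f' : Fin n → ℝ → V)
    (hf : ∀ i t, HasDerivAt (e i) (f i t) t)
    (hf' : ∀ i t, HasDerivAt (f i) (f' i t) t)
    (hbasis : ∀ t, LinearIndependent ℝ fun i => e i t)
    (hspan : ∀ t, J t = Submodule.span ℝ (Set.range fun i => e i t))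
    (hiso : ∀ t i j, ω (e i t) (e j t) = 0)
    (horth : ∀ t i j, ω (f i t) (e j t) = if i = j then 1 else 0)
    (hff : ∀ t i j, ω (f i t) (f j t) = 0)
    (hmax : ∀ t x, (∀ y ∈ J t, ω x y = 0) → x ∈ J t) :
    (∀ i t, f' i t ∈ J t) ∧
    ∃ R : ℝ → Matrix (Fin n) (Fin n) ℝ,
      (∀ t i, f' i t = -∑ j, R t i j • e j t) ∧
      (∀ t i j, ω (f i t) (f' j t) = ω (f j t) (f' i t)) := by
  classical
  set ωc : V →L[ℝ] V →L[ℝ] ℝ :=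
    LinearMap.toContinuousLinearMap
      { toFun := fun x => LinearMap.toContinuousLinearMap (ω x),
        map_add' := by intro x y; ext z; simp,
        map_smul' := by intro c x; ext z; simp } with hωc
  have hωc_apply : ∀ x y, ωc x y = ω x y := by intro x y; simp [hωc]
  have key : ∀ (u v u' v' : ℝ → V), (∀ t, HasDerivAt u (u' t) t) →
      (∀ t, HasDerivAt v (v' t) t) →
      ∀ t, HasDerivAt (fun s => ω (u s) (v s)) (ω (u' t) (v t) + ω (u t) (v' t)) t := by
    intro u v u' v' hu hv t
    have h1 : HasDerivAt (fun s => ωc (u s)) (ωc (u' t)) t :=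
      ωc.hasFDerivAt.comp_hasDerivAt t (hu t)
    have h2 := h1.clm_apply (hv t)
    simpa [hωc_apply] using h2
  have horth' : ∀ t i j, ω (f' i t) (e j t) = 0 := by
    intro t i j
    have h1 := key (f i) (e j) (f' i) (f j) (hf' i) (hf j) t
    have h2 : HasDerivAt (fun s => ω (f i s) (e j s)) 0 t := by
      have he : (fun s => ω (f i s) (e j s)) = fun _ => (if i = j then (1:ℝ) else 0) := by
        funext s; exact horth s i j
      rw [he]; exact hasDerivAt_const t _
    have h3 := h1.unique h2
    have h4 := hff t i j
    linarith
  have hsym : ∀ t i j, ω (f i t) (f' j t) = ω (f j t) (f' i t) := by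
    intro t i j
    have h1 := key (f i) (f j) (f' i) (f' j) (hf' i) (hf' j) t
    have h2 : HasDerivAt (fun s => ω (f i s) (f j s)) 0 t := by
      have he : (fun s => ω (f i s) (f j s)) = fun _ => (0:ℝ) := by
        funext s; exact hff s i j
      rw [he]; exact hasDerivAt_const t _
    have h3 := h1.unique h2
    have h4 := hskew (f' i t) (f j t)
    linarith
  have hmem : ∀ i t, f' i t ∈ J t := by
    intro i t
    apply hmax
    intro y hy
    rw [hspan] at hy
    induction hy using Submodule.span_induction with
    | mem x hx => obtain ⟨j, rfl⟩ := hx; exact horth' t i j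
    | zero => simp
    | add x y _ _ hx hy => simp [hx, hy]
    | smul c x _ hx => simp [hx]
  refine ⟨hmem, ⟨fun t i j => -ω (f j t) (f' i t), ?_, hsym⟩⟩
  intro t i
  have h := hmem i t
  rw [hspan] at h
  obtain ⟨c, hc⟩ := (Submodule.mem_span_range_iff_exists_fun ℝ).mp h
  have hcoef : ∀ j, ω (f j t) (f' i t) = c j := by
    intro j
    rw [← hc]
    simp [map_sum, _root_.map_smul, horth, mul_ite]
  have : (-∑ j, (-ω (f j t) (f' i t)) • e j t) = ∑ j, c j • e j t := by
    rw [← Finset.sum_neg_distrib]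
    congr 1; funext j
    rw [hcoef j]; simp
  rw [this, hc]
end

section
/- Let J be a regular curve in the Lagrangian Grassmannian of (V, ω) whose canonical frame gives solutions of the second-order system, and let Δ ⊂ V be a Lagrangian subspace transversal to J(t) for all t. Fix v ∈ Δ, v ≠ 0. If J(t) is transversal to J(0) for all t ≠ 0, then the reduced curve J̃(t) = (J(t) ∩ v^∠)/ℝv in the symplectic reduction Ṽ = v^∠/ℝv satisfies: J̃(t) is transversal to J̃(0) for all t ≠ 0. -/
set_option maxHeartbeats 1000000

theorem stmt14 {V : Type*} [NormedAddCommGroup V] [NormedSpace ℝ V]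
    [FiniteDimensional ℝ V]
    (n : ℕ) (hdim : Module.finrank ℝ V = 2 * n)
    (ω : V →ₗ[ℝ] V →ₗ[ℝ] ℝ)
    (hskew : ∀ x y, ω x y = -ω y x)
    (hnondeg : ∀ x, (∀ y, ω x y = 0) → x = 0)
    (J : ℝ → Submodule ℝ V)
    (e f : Fin n → ℝ → V)
    (hf : ∀ i t, HasDerivAt (e i) (f i t) t)
    (hbasis : ∀ t, LinearIndependent ℝ fun i => e i t)
    (hspan : ∀ t, J t = Submodule.span ℝ (Set.range fun i => e i t))
    (hiso : ∀ t i j, ω (e i t) (e j t) = 0)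
    (horth : ∀ t i j, ω (f i t) (e j t) = if i = j then 1 else 0)
    (hff : ∀ t i j, ω (f i t) (f j t) = 0)
    (Δ : Submodule ℝ V)
    (hΔiso : ∀ x ∈ Δ, ∀ y ∈ Δ, ω x y = 0)
    (hΔdim : Module.finrank ℝ Δ = n)
    (hΔtrans : ∀ t, Δ ⊓ J t = ⊥)
    (v : V) (hv : v ∈ Δ) (hv0 : v ≠ 0)
    (htrans : ∀ t : ℝ, t ≠ 0 → J t ⊓ J 0 = ⊥) :
    ∀ t : ℝ, t ≠ 0 →
      ((J t ⊓ LinearMap.ker (ω v)) ⊔ Submodule.span ℝ {v}) ⊓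
        ((J 0 ⊓ LinearMap.ker (ω v)) ⊔ Submodule.span ℝ {v})
      ≤ Submodule.span ℝ {v} := by
  classical
  intro t ht x hx
  rw [Submodule.mem_inf] at hx
  obtain ⟨hx1, hx2⟩ := hx
  obtain ⟨α, hα, s1, hs1, hxα⟩ := Submodule.mem_sup.mp hx1
  obtain ⟨β, hβ, s2, hs2, hxβ⟩ := Submodule.mem_sup.mp hx2
  obtain ⟨r, rfl⟩ := Submodule.mem_span_singleton.mp hs1
  obtain ⟨r', rfl⟩ := Submodule.mem_span_singleton.mp hs2
  obtain ⟨hαJ, hαk⟩ := Submodule.mem_inf.mp hα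
  obtain ⟨hβJ, hβk⟩ := Submodule.mem_inf.mp hβ
  rw [LinearMap.mem_ker] at hαk hβk
  -- dimension of J s
  have hJd : ∀ s : ℝ, Module.finrank ℝ (J s) = n := fun s => by
    rw [hspan s]
    simpa using finrank_span_eq_card (hbasis s)
  -- basis of Δ
  obtain db := Module.finBasisOfFinrankEq ℝ Δ hΔdim
  -- the map Φ : V → ℝⁿ, y ↦ (ω (db k) y)
  set Φ : V →ₗ[ℝ] (Fin n → ℝ) := LinearMap.pi (fun k => ω (db k : V)) with hΦdef
  have hΦapp : ∀ (y : V) (k : Fin n), Φ y k = ω (db k : V) y := fun y k => rfl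
  have hΔle : Δ ≤ LinearMap.ker Φ := by
    intro z hz
    rw [LinearMap.mem_ker]
    funext k
    exact hΔiso (db k : V) (db k).2 z hz
  -- ω : V → V* is surjective
  have hBsurj : Function.Surjective (ω : V →ₗ[ℝ] Module.Dual ℝ V) := by
    have hker0 : LinearMap.ker (ω : V →ₗ[ℝ] Module.Dual ℝ V) = ⊥ := by
      rw [LinearMap.ker_eq_bot']
      intro m hm
      exact hnondeg m fun y => by
        have := DFunLike.congr_fun hm y
        simpa using this
    rw [← LinearMap.range_eq_top]
    apply Submodule.eq_top_of_finrank_eq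
    have h1 := LinearMap.finrank_range_add_finrank_ker (ω : V →ₗ[ℝ] Module.Dual ℝ V)
    rw [hker0, finrank_bot, add_zero] at h1
    rw [h1, Subspace.dual_finrank_eq]
  -- Δ and J 0 are complementary
  have hcompl : IsCompl Δ (J 0) := by
    constructor
    · rw [disjoint_iff]; exact hΔtrans 0
    · rw [codisjoint_iff]
      apply Submodule.eq_top_of_finrank_eq
      have h2 := Submodule.finrank_sup_add_finrank_inf_eq Δ (J 0)
      rw [hΔtrans 0, finrank_bot, add_zero, hΔdim, hJd 0] at h2
      rw [h2, hdim]
      ring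
  -- Φ is surjective
  have hΦsurj : Function.Surjective Φ := by
    intro u
    set pr := Δ.linearProjOfIsCompl (J 0) hcompl with hprdef
    set ψ : Module.Dual ℝ Δ := ∑ k, (-(u k)) • db.coord k with hψdef
    obtain ⟨y, hy⟩ := hBsurj (ψ.comp pr)
    refine ⟨y, funext fun k => ?_⟩
    have h1 : ω y (db k : V) = ψ (pr (db k : V)) := by
      have := DFunLike.congr_fun hy (db k : V)
      simpa using this
    have h2 : pr (db k : V) = db k := Submodule.linearProjOfIsCompl_apply_left hcompl (db k)
    have h3 : ψ (db k) = -(u k) := by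
      rw [hψdef]
      simp [Module.Basis.coord_apply, Module.Basis.repr_self, Finsupp.single_apply, LinearMap.sum_apply,
        LinearMap.smul_apply, smul_eq_mul, mul_ite, mul_one, mul_zero, Finset.sum_ite_eq]
    show Φ y k = u k
    rw [hΦapp, hskew (db k : V) y, h1, h2, h3, neg_neg]
  -- ker Φ = Δ
  have hker : LinearMap.ker Φ = Δ := by
    symm
    apply Submodule.eq_of_le_of_finrank_le hΔle
    have h1 := LinearMap.finrank_range_add_finrank_ker Φ
    rw [LinearMap.range_eq_top.mpr hΦsurj, finrank_top, Module.finrank_fin_fun, hdim] at h1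
    rw [hΔdim]
    omega
  -- continuous-linear machinery
  set L : V →L[ℝ] (Fin n → ℝ) := LinearMap.toContinuousLinearMap Φ with hLdef
  have hLapp : ∀ y : V, L y = Φ y := fun y => by
    rw [hLdef, LinearMap.coe_toContinuousLinearMap']
  set M : ℝ → (Fin n → ℝ) →L[ℝ] V :=
    fun s => ∑ i, (ContinuousLinearMap.proj i : (Fin n → ℝ) →L[ℝ] ℝ).smulRight (e i s) with hMdef
  set M' : ℝ → (Fin n → ℝ) →L[ℝ] V :=
    fun s => ∑ i, (ContinuousLinearMap.proj i : (Fin n → ℝ) →L[ℝ] ℝ).smulRight (f i s) with hM'def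
  have hMapp : ∀ (s : ℝ) (c : Fin n → ℝ), M s c = ∑ i, c i • e i s := by
    intro s c
    rw [hMdef]
    simp [ContinuousLinearMap.sum_apply, ContinuousLinearMap.smulRight_apply,
      ContinuousLinearMap.proj_apply]
  have hM'app : ∀ (s : ℝ) (c : Fin n → ℝ), M' s c = ∑ i, c i • f i s := by
    intro s c
    rw [hM'def]
    simp [ContinuousLinearMap.sum_apply, ContinuousLinearMap.smulRight_apply,
      ContinuousLinearMap.proj_apply]
  have hMder : ∀ s, HasDerivAt M (M' s) s := by
    intro s
    rw [hMdef, hM'def]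
    apply HasDerivAt.fun_sum
    intro i _
    have h := (ContinuousLinearMap.smulRightL ℝ (Fin n → ℝ) V
      (ContinuousLinearMap.proj i : (Fin n → ℝ) →L[ℝ] ℝ)).hasFDerivAt.comp_hasDerivAt s (hf i s)
    simpa [Function.comp_def] using h
  set T : ℝ → (Fin n → ℝ) →L[ℝ] (Fin n → ℝ) := fun s => L.comp (M s) with hTdef
  have hTapp : ∀ (s : ℝ) (c : Fin n → ℝ), T s c = Φ (M s c) := by
    intro s c
    rw [hTdef]
    simp [ContinuousLinearMap.comp_apply, hLapp]
  have hTder : ∀ s, HasDerivAt T (L.comp (M' s)) s := by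
    intro s
    rw [hTdef]
    have h := ((ContinuousLinearMap.compL ℝ (Fin n → ℝ) V (Fin n → ℝ))
      L).hasFDerivAt.comp_hasDerivAt s (hMder s)
    simpa [Function.comp_def] using h
  -- membership in J s
  have hMJ : ∀ (s : ℝ) (c : Fin n → ℝ), M s c ∈ J s := by
    intro s c
    rw [hMapp, hspan]
    exact Submodule.sum_mem _ fun i _ =>
      Submodule.smul_mem _ _ (Submodule.subset_span ⟨i, rfl⟩)
  -- T s is a unit
  have hTu : ∀ s, IsUnit (T s) := by
    intro s
    have hinj : Function.Injective (T s) := by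
      intro c1 c2 h12
      have h0 : M s (c1 - c2) ∈ Δ := by
        rw [← hker, LinearMap.mem_ker, ← hTapp, map_sub, h12, sub_self]
      have h00 : M s (c1 - c2) ∈ Δ ⊓ J s := Submodule.mem_inf.mpr ⟨h0, hMJ s _⟩
      rw [hΔtrans s, Submodule.mem_bot] at h00
      rw [hMapp] at h00
      have hz := Fintype.linearIndependent_iff.mp (hbasis s) (c1 - c2) h00
      funext i
      have := hz i
      rw [Pi.sub_apply] at this
      linarith
    have hbij : Function.Bijective ((T s : (Fin n → ℝ) →ₗ[ℝ] (Fin n → ℝ))) :=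
      ⟨hinj, LinearMap.injective_iff_surjective.mp hinj⟩
    set eqv := LinearEquiv.ofBijective ((T s : (Fin n → ℝ) →ₗ[ℝ] (Fin n → ℝ))) hbij with heqv
    refine ⟨⟨T s, LinearMap.toContinuousLinearMap (eqv.symm : (Fin n → ℝ) →ₗ[ℝ] (Fin n → ℝ)),
      ?_, ?_⟩, rfl⟩
    · apply ContinuousLinearMap.ext
      intro c
      rw [ContinuousLinearMap.mul_apply, ContinuousLinearMap.one_apply,
        LinearMap.coe_toContinuousLinearMap']
      exact eqv.apply_symm_apply c
    · apply ContinuousLinearMap.ext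
      intro c
      rw [ContinuousLinearMap.mul_apply, ContinuousLinearMap.one_apply,
        LinearMap.coe_toContinuousLinearMap']
      exact eqv.symm_apply_apply c
  -- inverse family
  set Ti : ℝ → (Fin n → ℝ) →L[ℝ] (Fin n → ℝ) := fun s => Ring.inverse (T s) with hTidef
  have hTider : ∀ s, DifferentiableAt ℝ Ti s := by
    intro s
    have h1 := hasFDerivAt_ringInverse (𝕜 := ℝ) (hTu s).unit
    rw [(hTu s).unit_spec] at h1
    have h2 := h1.comp_hasDerivAt s (hTder s)
    exact h2.differentiableAt
  set u : Fin n → ℝ := Φ x with hudef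
  set c : ℝ → Fin n → ℝ := fun s => Ti s u with hcdef
  have hcder : ∀ s, DifferentiableAt ℝ c s := fun s =>
    (hTider s).clm_apply (differentiableAt_const u)
  set γ : ℝ → Fin n → ℝ := fun s => deriv c s with hγdef
  have hcder' : ∀ s, HasDerivAt c (γ s) s := fun s => (hcder s).hasDerivAt
  have hTc : ∀ s, T s (c s) = u := by
    intro s
    have h1 : T s * Ti s = 1 := Ring.mul_inverse_cancel _ (hTu s)
    calc T s (c s) = (T s * Ti s) u := by rw [ContinuousLinearMap.mul_apply]
    _ = u := by rw [h1, ContinuousLinearMap.one_apply]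
  set a : ℝ → V := fun s => M s (c s) with hadef
  have haJ : ∀ s, a s ∈ J s := fun s => hMJ s (c s)
  set w : ℝ → V := fun s => M' s (c s) + M s (γ s) with hwdef
  have hader : ∀ s, HasDerivAt a (w s) s := fun s => (hMder s).clm_apply (hcder' s)
  have hΦa : ∀ s, Φ (a s) = u := by
    intro s
    show Φ (M s (c s)) = u
    rw [← hTapp]
    exact hTc s
  have hdΔ : ∀ s, x - a s ∈ Δ := by
    intro s
    rw [← hker, LinearMap.mem_ker, map_sub, hΦa s, hudef, sub_self]
  have hwΔ : ∀ s, w s ∈ Δ := by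
    intro s
    rw [← hker, LinearMap.mem_ker]
    funext k
    set Lk : V →L[ℝ] ℝ := LinearMap.toContinuousLinearMap (ω (db k : V)) with hLkdef
    have hLkapp : ∀ y : V, Lk y = ω (db k : V) y := fun y => by
      rw [hLkdef, LinearMap.coe_toContinuousLinearMap']
    have hLk := Lk.hasFDerivAt.comp_hasDerivAt s (hader s)
    have heq : (⇑Lk ∘ a) = fun _ : ℝ => u k := by
      funext σ
      rw [Function.comp_apply, hLkapp]
      calc ω (db k : V) (a σ) = Φ (a σ) k := (hΦapp _ _).symm
      _ = u k := by rw [hΦa σ]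
    rw [heq] at hLk
    have h0 := hLk.unique (hasDerivAt_const s (u k))
    calc Φ (w s) k = ω (db k : V) (w s) := hΦapp _ _
    _ = Lk (w s) := (hLkapp _).symm
    _ = 0 := h0
  -- the monotone function G
  set G : ℝ → ℝ := fun s => ω (a s) x with hGdef
  have hGder : ∀ s, HasDerivAt G (ω (w s) x) s := by
    intro s
    set Lx : V →L[ℝ] ℝ := LinearMap.toContinuousLinearMap (ω.flip x) with hLxdef
    have hLxapp : ∀ y : V, Lx y = ω y x := fun y => by
      rw [hLxdef, LinearMap.coe_toContinuousLinearMap']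
      rfl
    have h := Lx.hasFDerivAt.comp_hasDerivAt s (hader s)
    have heq : (⇑Lx ∘ a) = G := by
      funext σ
      show Lx (a σ) = ω (a σ) x
      rw [hLxapp]
    rw [heq, hLxapp] at h
    exact h
  have hGval : ∀ s, ω (w s) x = ∑ i, (c s i)^2 := by
    intro s
    have h0 : a s + (x - a s) = x := by abel
    have hsplit : ω (w s) x = ω (w s) (a s) + ω (w s) (x - a s) := by
      conv_lhs => rw [← h0]
      rw [map_add]
    have h2 : ω (w s) (x - a s) = 0 := hΔiso _ (hwΔ s) _ (hdΔ s)
    have h3 : ω (w s) (a s) = ∑ i, (c s i)^2 := by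
      have hwc : w s = (∑ i, c s i • f i s) + (∑ i, γ s i • e i s) := by
        show M' s (c s) + M s (γ s) = _
        rw [hM'app, hMapp]
      have hac : a s = ∑ j, c s j • e j s := by
        show M s (c s) = _
        rw [hMapp]
      rw [hwc, hac]
      simp only [map_add, map_sum, map_smul, LinearMap.add_apply, LinearMap.sum_apply,
        LinearMap.smul_apply, smul_eq_mul, hiso, horth, mul_zero, mul_one, mul_ite,
        Finset.sum_const_zero, add_zero, Finset.sum_ite_eq, Finset.mem_univ, if_true]
      simp [sq]
    rw [hsplit, h2, h3, add_zero]
  -- endpoints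
  have hat : a t = α := by
    have h1 : a t - α ∈ J t := Submodule.sub_mem _ (haJ t) hαJ
    have h3 : a t - α = r • v - (x - a t) := by
      rw [← hxα]; abel
    have h2 : a t - α ∈ Δ := by
      rw [h3]
      exact Submodule.sub_mem _ (Submodule.smul_mem _ _ hv) (hdΔ t)
    have h4 : a t - α ∈ Δ ⊓ J t := Submodule.mem_inf.mpr ⟨h2, h1⟩
    rw [hΔtrans t, Submodule.mem_bot] at h4
    exact sub_eq_zero.mp h4
  have ha0 : a 0 = β := by
    have h1 : a 0 - β ∈ J 0 := Submodule.sub_mem _ (haJ 0) hβJ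
    have h3 : a 0 - β = r' • v - (x - a 0) := by
      rw [← hxβ]; abel
    have h2 : a 0 - β ∈ Δ := by
      rw [h3]
      exact Submodule.sub_mem _ (Submodule.smul_mem _ _ hv) (hdΔ 0)
    have h4 : a 0 - β ∈ Δ ⊓ J 0 := Submodule.mem_inf.mpr ⟨h2, h1⟩
    rw [hΔtrans 0, Submodule.mem_bot] at h4
    exact sub_eq_zero.mp h4
  have hGt : G t = 0 := by
    show ω (a t) x = 0
    rw [hat, ← hxα, map_add, map_smul, smul_eq_mul]
    have hαα : ω α α = 0 := by have := hskew α α; linarith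
    have hαv : ω α v = 0 := by rw [hskew α v, hαk, neg_zero]
    rw [hαα, hαv, mul_zero, add_zero]
  have hG0 : G 0 = 0 := by
    show ω (a 0) x = 0
    rw [ha0, ← hxβ, map_add, map_smul, smul_eq_mul]
    have hββ : ω β β = 0 := by have := hskew β β; linarith
    have hβv : ω β v = 0 := by rw [hskew β v, hβk, neg_zero]
    rw [hββ, hβv, mul_zero, add_zero]
  -- finish
  by_cases hxΔ : x ∈ Δ
  · have hα0 : α = x - r • v := by rw [← hxα]; abel
    have hαm : α ∈ Δ ⊓ J t := Submodule.mem_inf.mpr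
      ⟨by rw [hα0]; exact Submodule.sub_mem _ hxΔ (Submodule.smul_mem _ _ hv), hαJ⟩
    rw [hΔtrans t, Submodule.mem_bot] at hαm
    rw [← hxα, hαm, zero_add]
    exact Submodule.smul_mem _ _ (Submodule.mem_span_singleton_self v)
  · exfalso
    have hpos : ∀ s, 0 < deriv G s := by
      intro s
      rw [(hGder s).deriv, hGval s]
      have hne : c s ≠ 0 := by
        intro h0
        apply hxΔ
        have hz : a s = 0 := by show M s (c s) = 0; rw [h0, map_zero]
        have h5 := hdΔ s
        rwa [hz, sub_zero] at h5
      have h6 : 0 ≤ ∑ i, (c s i)^2 := Finset.sum_nonneg fun i _ => sq_nonneg _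
      rcases h6.lt_or_eq with h | h
      · exact h
      · exfalso
        apply hne
        funext i
        have h7 := (Finset.sum_eq_zero_iff_of_nonneg (fun i _ => sq_nonneg (c s i))).mp h.symm i (Finset.mem_univ i)
        exact pow_eq_zero_iff (two_ne_zero) |>.mp h7
    have hsm := strictMono_of_deriv_pos hpos
    rcases ht.lt_or_gt with h | h
    · have := hsm h
      rw [hGt, hG0] at this
      exact lt_irrefl 0 this
    · have := hsm h
      rw [hGt, hG0] at this
      exact lt_irrefl 0 this
end

section
/- Trace Riccati rigidity: let (X, μ, φ_t) be a measure-preserving flow on a compact space, and let S : X → Matrix (Fin (n-1)) (Fin (n-1)) ℝ be a continuous symmetric-matrix-valued function and r : X → ℝ continuous, such that for every α, t ↦ tr(S(φ_t α)) is differentiable and (d/dt) tr(S(φ_t α)) + tr(S(φ_t α)²) + r(φ_t α) = 0. Then ∫_X r dμ ≤ 0, with equality iff S vanishes μ-almost everywhere, in which case r = 0 on the support of μ. -/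
open Matrix MeasureTheory

-- Auxiliary: a continuous function on a compact space is integrable w.r.t. a finite measure.
lemma aux_integrable {X : Type*} [TopologicalSpace X] [CompactSpace X]
    [MeasurableSpace X] [BorelSpace X] (μ : Measure X) [IsFiniteMeasure μ]
    {f : X → ℝ} (hf : Continuous f) : Integrable f μ := by
  obtain ⟨C, hC⟩ := (isCompact_range hf).isBounded.exists_norm_le
  refine ⟨hf.measurable.aestronglyMeasurable, ?_⟩
  exact HasFiniteIntegral.of_bounded (C := C)
    (Filter.Eventually.of_forall fun x => hC _ (Set.mem_range_self x))

theorem stmt17 {X : Type*} [TopologicalSpace X] [CompactSpace X]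
    [MeasurableSpace X] [BorelSpace X]
    (μ : Measure X) [IsProbabilityMeasure μ]
    (φ : ℝ → X → X)
    (hφ0 : φ 0 = id)
    (hφadd : ∀ s t, φ (s + t) = φ s ∘ φ t)
    (hφmp : ∀ t, MeasurePreserving (φ t) μ μ)
    (m : ℕ)
    (S : X → Matrix (Fin m) (Fin m) ℝ)
    (hSsymm : ∀ α, (S α)ᵀ = S α)
    (hScont : ∀ i j, Continuous fun α => S α i j)
    (r : X → ℝ) (hrcont : Continuous r)
    (hriccati : ∀ α : X, ∀ t : ℝ,
      HasDerivAt (fun τ => (S (φ τ α)).trace)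
        (-(((S (φ t α)) * (S (φ t α))).trace + r (φ t α))) t) :
    (∫ α, r α ∂μ) ≤ 0 ∧
    ((∫ α, r α ∂μ) = 0 ↔ ∀ᵐ α ∂μ, S α = 0) ∧
    ((∫ α, r α ∂μ) = 0 →
      ∀ x : X, (∀ O ∈ nhds x, μ O ≠ 0) → r x = 0) := by
  -- basic continuity facts
  have hf : Continuous fun α => (S α).trace := by
    unfold Matrix.trace Matrix.diag
    exact continuous_finset_sum _ fun i _ => hScont i i
  have htrsq : ∀ α, (S α * S α).trace = ∑ i, ∑ j, S α i j * S α i j := by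
    intro α
    have hji : ∀ i j, S α j i = S α i j := by
      intro i j
      conv_lhs => rw [← hSsymm α, Matrix.transpose_apply]
    simp only [Matrix.trace, Matrix.diag, Matrix.mul_apply]
    exact Finset.sum_congr rfl fun i _ => Finset.sum_congr rfl fun j _ => by rw [hji]
  have hq : Continuous fun α => (S α * S α).trace := by
    have : (fun α => (S α * S α).trace) = fun α => ∑ i, ∑ j, S α i j * S α i j :=
      funext htrsq
    rw [this]
    exact continuous_finset_sum _ fun i _ =>
      continuous_finset_sum _ fun j _ => (hScont i j).mul (hScont i j)
  have hq0 : ∀ α, 0 ≤ (S α * S α).trace := by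
    intro α
    rw [htrsq]
    exact Finset.sum_nonneg fun i _ => Finset.sum_nonneg fun j _ => mul_self_nonneg _
  have hg : Continuous fun α => (S α * S α).trace + r α := hq.add hrcont
  -- uniform bound for g
  obtain ⟨C, hC⟩ := (isCompact_range hg).isBounded.exists_norm_le
  -- invariance of integrals
  have hint : ∀ (h : X → ℝ), Continuous h → ∀ t : ℝ,
      (∫ α, h (φ t α) ∂μ) = ∫ α, h α ∂μ := by
    intro h hh t
    conv_rhs => rw [← (hφmp t).map_eq]
    rw [integral_map (hφmp t).measurable.aemeasurable hh.measurable.aestronglyMeasurable]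
  -- derivative under the integral sign at t = 0
  have key := hasDerivAt_integral_of_dominated_loc_of_deriv_le (μ := μ) (x₀ := (0:ℝ))
      (s := Metric.ball 0 1) (F := fun t α => (S (φ t α)).trace)
      (F' := fun t α => -(((S (φ t α)) * (S (φ t α))).trace + r (φ t α)))
      (bound := fun _ => C) (Metric.ball_mem_nhds _ one_pos)
      (Filter.Eventually.of_forall fun t =>
        (hf.measurable.comp (hφmp t).measurable).aestronglyMeasurable)
      (by simpa [hφ0] using aux_integrable μ hf)
      ((((hq.add hrcont).measurable.comp (hφmp 0).measurable).neg).aestronglyMeasurable)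
      (Filter.Eventually.of_forall fun α t _ => by
        rw [norm_neg]; exact hC _ (Set.mem_range_self _))
      (integrable_const C)
      (Filter.Eventually.of_forall fun α t _ => hriccati α t)
  have hconst : (fun t : ℝ => ∫ α, (S (φ t α)).trace ∂μ) =
      fun _ => ∫ α, (S α).trace ∂μ := funext fun t => hint _ hf t
  have hderiv0 : (∫ α, -(((S (φ 0 α)) * (S (φ 0 α))).trace + r (φ 0 α)) ∂μ) = 0 := by
    have h1 := key.2
    rw [hconst] at h1
    exact h1.unique (hasDerivAt_const 0 _)
  have hgzero : (∫ α, ((S α * S α).trace + r α) ∂μ) = 0 := by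
    have : (fun α => -(((S (φ 0 α)) * (S (φ 0 α))).trace + r (φ 0 α))) =
        fun α => -(((S α) * (S α)).trace + r α) := by rw [hφ0]; rfl
    rw [this, integral_neg, neg_eq_zero] at hderiv0
    exact hderiv0
  have hqint : Integrable (fun α => (S α * S α).trace) μ := aux_integrable μ hq
  have hrint : Integrable r μ := aux_integrable μ hrcont
  have hsplit : (∫ α, (S α * S α).trace ∂μ) + (∫ α, r α ∂μ) = 0 := by
    rw [← integral_add hqint hrint]; exact hgzero
  have hqnn : 0 ≤ ∫ α, (S α * S α).trace ∂μ := integral_nonneg hq0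
  have hr_eq : (∫ α, r α ∂μ) = -(∫ α, (S α * S α).trace ∂μ) := by linarith
  -- part 1
  have part1 : (∫ α, r α ∂μ) ≤ 0 := by rw [hr_eq]; linarith
  -- part 2
  have part2 : (∫ α, r α ∂μ) = 0 ↔ ∀ᵐ α ∂μ, S α = 0 := by
    constructor
    · intro h0
      have hq_int0 : (∫ α, (S α * S α).trace ∂μ) = 0 := by linarith [hsplit, h0]
      have := (integral_eq_zero_iff_of_nonneg hq0 hqint).mp hq_int0
      filter_upwards [this] with α hα
      have hα' : (∑ i, ∑ j, S α i j * S α i j) = 0 := by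
        rw [← htrsq]; exact hα
      ext i j
      have hin : ∀ i ∈ Finset.univ, (0:ℝ) ≤ ∑ j, S α i j * S α i j :=
        fun i _ => Finset.sum_nonneg fun j _ => mul_self_nonneg _
      have h1 := (Finset.sum_eq_zero_iff_of_nonneg hin).mp hα' i (Finset.mem_univ i)
      have h2 := (Finset.sum_eq_zero_iff_of_nonneg
        (fun j _ => mul_self_nonneg (S α i j))).mp h1 j (Finset.mem_univ j)
      simpa [mul_self_eq_zero] using h2
    · intro hS0
      have : (∫ α, (S α * S α).trace ∂μ) = 0 := by
        rw [integral_congr_ae (g := fun _ => (0:ℝ))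
          (by filter_upwards [hS0] with α hα; simp [hα])]
        simp
      linarith [hsplit, this]
  refine ⟨part1, part2, ?_⟩
  -- part 3
  intro h0 x hx
  have hS0 : ∀ᵐ α ∂μ, S α = 0 := part2.mp h0
  -- transport along rational times
  have hSmeas : MeasurableSet {β : X | S β = 0} := by
    have : {β : X | S β = 0} = ⋂ i, ⋂ j, {β : X | S β i j = 0} := by
      ext β
      simp only [Set.mem_setOf_eq, Set.mem_iInter]
      constructor
      · intro h i j; rw [h]; rfl
      · intro h; ext i j; exact h i j
    rw [this]
    exact MeasurableSet.iInter fun i => MeasurableSet.iInter fun j =>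
      (isClosed_eq (hScont i j) continuous_const).measurableSet
  have hSq : ∀ q : ℚ, ∀ᵐ α ∂μ, S (φ (q : ℝ) α) = 0 := by
    intro q
    have h1 : μ {β : X | ¬ S β = 0} = 0 := ae_iff.mp hS0
    have h2 : μ ((φ (q : ℝ)) ⁻¹' {β : X | ¬ S β = 0}) = 0 := by
      rw [show {β : X | ¬ S β = 0} = {β : X | S β = 0}ᶜ from rfl,
        (hφmp (q : ℝ)).measure_preimage hSmeas.compl.nullMeasurableSet]
      exact h1
    rw [ae_iff]
    exact h2
  have hSqall : ∀ᵐ α ∂μ, ∀ q : ℚ, S (φ (q : ℝ) α) = 0 := ae_all_iff.mpr hSq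
  have hr0 : ∀ᵐ α ∂μ, r α = 0 := by
    filter_upwards [hSqall] with α hα
    -- the trace along the orbit vanishes at rational times hence everywhere
    have hdiff : Differentiable ℝ fun t : ℝ => (S (φ t α)).trace :=
      fun t => (hriccati α t).differentiableAt
    have hcont : Continuous fun t : ℝ => (S (φ t α)).trace := hdiff.continuous
    have hzero : (fun t : ℝ => (S (φ t α)).trace) = fun _ => (0:ℝ) := by
      apply Rat.denseRange_cast.equalizer hcont continuous_const
      funext q
      simp only [Function.comp_apply, hα q, Matrix.trace_zero]
    have hd := hriccati α 0
    rw [hzero] at hd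
    have := hd.unique (hasDerivAt_const 0 0)
    have hSα : S α = 0 := by
      have := hα 0
      rwa [Rat.cast_zero, hφ0] at this
    rw [hφ0] at this
    simp only [id_eq, hSα, Matrix.zero_mul, Matrix.trace_zero, zero_add, neg_eq_zero] at this
    exact this
  by_contra hrx
  have hU : IsOpen {y : X | r y ≠ 0} :=
    (isClosed_eq hrcont continuous_const).isOpen_compl
  exact hx _ (hU.mem_nhds hrx) (ae_iff.mp hr0)
end
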